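/- Assume (H1) and (H2). For every ξ ∈ Σ^cod, writing I_ξ = [x_{ξ⁺}, x_{ξ⁻}], the point (ξ, x_{ξ⁻}) belongs to the homoclinic class H(P,F) and the point (ξ, x_{ξ⁺}) belongs to the homoclinic class H(Q,F). -/
import Mathlib


open Set MeasureTheory Filter

namespace DGR

/-- The two-sided sequence space `Σ₂ = {0,1}^ℤ`. -/
abbrev Seq2 := ℤ → Fin 2

/-- The left shift map `σ`. -/
def shift (ξ : Seq2) : Seq2 := fun n => ξ (n + 1)

/-- The constant sequence `0^ℤ`. -/
def zeroSeq : Seq2 := fun _ => 0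

/-- The skew-product `F̃(ξ,x) = (σ ξ, f̃_{ξ₀} x)`. -/
def F (f0 f1 : ℝ → ℝ) (p : Seq2 × ℝ) : Seq2 × ℝ :=
  (shift p.1, if p.1 0 = 0 then f0 p.2 else f1 p.2)

/-- The fixed point `P = (0^ℤ, 1)`. -/
def Pfix : Seq2 × ℝ := (zeroSeq, 1)

/-- The fixed point `Q = (0^ℤ, 0)`. -/
def Qfix : Seq2 × ℝ := (zeroSeq, 0)

/-- `f_ξ^n = f_{ξ_{n-1}} ∘ ⋯ ∘ f_{ξ₀}`. -/
def fIter (f0 f1 : ℝ → ℝ) (ξ : Seq2) : ℕ → ℝ → ℝ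
  | 0, x => x
  | n + 1, x => (if ξ (n : ℤ) = 0 then f0 else f1) (fIter f0 f1 ξ n x)

/-- The derivative `(f_ξ^n)'(x)` (chain rule product). -/
def fIterDeriv (f0 f1 df0 df1 : ℝ → ℝ) (ξ : Seq2) : ℕ → ℝ → ℝ
  | 0, _ => 1
  | n + 1, x => fIterDeriv f0 f1 df0 df1 ξ n x *
      (if ξ (n : ℤ) = 0 then df0 else df1) (fIter f0 f1 ξ n x)

/-- `ξ⁺` is admissible for `x`: all forward iterates are defined and stay in `[0,1]`. -/
def forwardAdmissible (f0 f1 : ℝ → ℝ) (d : ℝ) (ξ : Seq2) (x : ℝ) : Prop :=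
  ∀ n : ℕ, fIter f0 f1 ξ n x ∈ Icc (0 : ℝ) 1 ∧ (ξ (n : ℤ) = 1 → d ≤ fIter f0 f1 ξ n x)

/-- `ξ⁻` is admissible for `x`: there is a backward orbit through `x` staying in `[0,1]`. -/
def backwardAdmissible (f0 f1 : ℝ → ℝ) (d : ℝ) (ξ : Seq2) (x : ℝ) : Prop :=
  ∃ y : ℕ → ℝ, y 0 = x ∧ ∀ m : ℕ,
    y m ∈ Icc (0 : ℝ) 1 ∧
    (ξ (-(m : ℤ) - 1) = 0 → f0 (y (m + 1)) = y m) ∧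
    (ξ (-(m : ℤ) - 1) = 1 → d ≤ y (m + 1) ∧ f1 (y (m + 1)) = y m)

/-- The maximal invariant set `Γ` of `F̃` in `Σ₂ × [0,1]`. -/
def Gamma (f0 f1 : ℝ → ℝ) (d : ℝ) : Set (Seq2 × ℝ) :=
  { p | forwardAdmissible f0 f1 d p.1 p.2 ∧ backwardAdmissible f0 f1 d p.1 p.2 }

/-- The subshift `Σ = π(Γ)` of admissible sequences. -/
def SigmaA (f0 f1 : ℝ → ℝ) (d : ℝ) : Set Seq2 := Prod.fst '' Gamma f0 f1 d

/-- `I_{ξ⁺}`. -/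
def Iplus (f0 f1 : ℝ → ℝ) (d : ℝ) (ξ : Seq2) : Set ℝ := { x | forwardAdmissible f0 f1 d ξ x }

/-- `I_{ξ⁻}`. -/
def Iminus (f0 f1 : ℝ → ℝ) (d : ℝ) (ξ : Seq2) : Set ℝ := { x | backwardAdmissible f0 f1 d ξ x }

/-- `I_ξ = I_{ξ⁺} ∩ I_{ξ⁻}`, the spine over `ξ`. -/
def Ifiber (f0 f1 : ℝ → ℝ) (d : ℝ) (ξ : Seq2) : Set ℝ := Iplus f0 f1 d ξ ∩ Iminus f0 f1 d ξ

/-- `x_{ξ⁺}`, the left endpoint of `I_{ξ⁺} = [x_{ξ⁺}, 1]`. -/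
noncomputable def xPlus (f0 f1 : ℝ → ℝ) (d : ℝ) (ξ : Seq2) : ℝ := sInf (Iplus f0 f1 d ξ)

/-- `x_{ξ⁻}`, the right endpoint of `I_{ξ⁻} = [0, x_{ξ⁻}]`. -/
noncomputable def xMinus (f0 f1 : ℝ → ℝ) (d : ℝ) (ξ : Seq2) : ℝ := sSup (Iminus f0 f1 d ξ)

/-- Hypothesis (H1), stated for strictly increasing differentiable extensions
`f0, f1 : ℝ → ℝ` with derivative functions `df0, df1`, whose restrictions to
`[0,1]` resp. `[d,1]` are the fiber maps. -/
structure H1 (f0 f1 df0 df1 : ℝ → ℝ) (d : ℝ) : Prop where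
  d_mem : d ∈ Ioo (0 : ℝ) 1
  mono0 : StrictMono f0
  mono1 : StrictMono f1
  hasDeriv0 : ∀ x, HasDerivAt f0 (df0 x) x
  hasDeriv1 : ∀ x, HasDerivAt f1 (df1 x) x
  contDeriv0 : ContinuousOn df0 (Icc 0 1)
  contDeriv1 : ContinuousOn df1 (Icc d 1)
  maps0 : MapsTo f0 (Icc 0 1) (Icc 0 1)
  surj0 : SurjOn f0 (Icc 0 1) (Icc 0 1)
  maps1 : MapsTo f1 (Icc d 1) (Icc 0 1)
  deriv0_zero : 1 < df0 0
  deriv0_one : df0 1 ∈ Ioo (0 : ℝ) 1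
  f0_above : ∀ x ∈ Ioo (0 : ℝ) 1, x < f0 x
  f1_d : f1 d = 0
  f1_below : ∀ x ∈ Icc d 1, f1 x < x
  deriv1_one : 0 < df1 1

/-- Hypothesis (H2): `f₀'` strictly decreasing, `f₁'` nonincreasing. -/
def H2 (df0 df1 : ℝ → ℝ) (d : ℝ) : Prop :=
  StrictAntiOn df0 (Icc 0 1) ∧ AntitoneOn df1 (Icc d 1)

/-- Hypothesis (H2+) with constant `M`. -/
def H2plus (df0 df1 : ℝ → ℝ) (d M : ℝ) : Prop :=
  1 < M ∧
  (∀ x ∈ Icc (0 : ℝ) 1, ∀ y ∈ Icc (0 : ℝ) 1, x < y →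
    M⁻¹ * (y - x) ≤ Real.log (df0 x) - Real.log (df0 y) ∧
      Real.log (df0 x) - Real.log (df0 y) ≤ M * (y - x)) ∧
  (∀ x ∈ Icc d 1, ∀ y ∈ Icc d 1, x < y →
    M⁻¹ * (y - x) ≤ Real.log (df1 x) - Real.log (df1 y) ∧
      Real.log (df1 x) - Real.log (df1 y) ≤ M * (y - x))

/-- The fiber Lyapunov exponent `χ(μ) = ∫ log f'_{ξ₀}(x) dμ(ξ,x)`. -/
noncomputable def lyap (df0 df1 : ℝ → ℝ) (μ : Measure (Seq2 × ℝ)) : ℝ :=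
  ∫ p, Real.log ((if p.1 0 = 0 then df0 else df1) p.2) ∂μ

/-- An `F`-invariant Borel probability measure on `Γ`. -/
def IsInvGamma (f0 f1 : ℝ → ℝ) (d : ℝ) (μ : Measure (Seq2 × ℝ)) : Prop :=
  IsProbabilityMeasure μ ∧ μ (Gamma f0 f1 d) = 1 ∧ μ.map (F f0 f1) = μ

/-- An ergodic `F`-invariant Borel probability measure on `Γ`. -/
def IsErgGamma (f0 f1 : ℝ → ℝ) (d : ℝ) (μ : Measure (Seq2 × ℝ)) : Prop :=
  IsInvGamma f0 f1 d μ ∧ Ergodic (F f0 f1) μ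

/-- A `σ`-invariant Borel probability measure on `Σ`. -/
def IsInvSigma (f0 f1 : ℝ → ℝ) (d : ℝ) (ν : Measure Seq2) : Prop :=
  IsProbabilityMeasure ν ∧ ν (SigmaA f0 f1 d) = 1 ∧ ν.map shift = ν

/-- An ergodic `σ`-invariant Borel probability measure on `Σ`. -/
def IsErgSigma (f0 f1 : ℝ → ℝ) (d : ℝ) (ν : Measure Seq2) : Prop :=
  IsInvSigma f0 f1 d ν ∧ Ergodic shift ν

/-- `f_{[w]} = f_{w_{n-1}} ∘ ⋯ ∘ f_{w_0}` for a finite word `w`. -/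
def fWord (f0 f1 : ℝ → ℝ) : List (Fin 2) → ℝ → ℝ
  | [], x => x
  | i :: w, x => fWord f0 f1 w ((if i = 0 then f0 else f1) x)

/-- The derivative `(f_{[w]})'(x)`. -/
def fWordDeriv (f0 f1 df0 df1 : ℝ → ℝ) : List (Fin 2) → ℝ → ℝ
  | [], _ => 1
  | i :: w, x => (if i = 0 then df0 x else df1 x) *
      fWordDeriv f0 f1 df0 df1 w ((if i = 0 then f0 else f1) x)

/-- The word `w` is (forward) admissible at `x`. -/
def wordAdm (f0 f1 : ℝ → ℝ) (d : ℝ) : List (Fin 2) → ℝ → Prop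
  | [], x => x ∈ Icc (0 : ℝ) 1
  | i :: w, x => x ∈ Icc (0 : ℝ) 1 ∧ (i = 1 → d ≤ x) ∧
      wordAdm f0 f1 d w ((if i = 0 then f0 else f1) x)

/-- The admissibility interval `I_{[w]}`. -/
def IWord (f0 f1 : ℝ → ℝ) (d : ℝ) (w : List (Fin 2)) : Set ℝ := { x | wordAdm f0 f1 d w x }

/-- The point `a_{[w]}`, left endpoint of `I_{[w]} = [a_{[w]}, 1]`. -/
noncomputable def aWord (f0 f1 : ℝ → ℝ) (d : ℝ) (w : List (Fin 2)) : ℝ := sInf (IWord f0 f1 d w)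

/-- The periodic sequence `w^ℤ`. -/
def perSeq (w : List (Fin 2)) : Seq2 := fun n => w.getD (n % (w.length : ℤ)).toNat 0

/-- The finite word `(ξ_a, ξ_{a+1}, …, ξ_{a+n-1})` read off a sequence. -/
def seqWord (ξ : Seq2) (a : ℤ) (n : ℕ) : List (Fin 2) := List.ofFn fun i : Fin n => ξ (a + (i.1 : ℤ))

/-- `X` is a periodic point of `F` in `Γ` with period `n ≥ 1`. -/
def IsPerPt (f0 f1 : ℝ → ℝ) (d : ℝ) (X : Seq2 × ℝ) (n : ℕ) : Prop :=
  X ∈ Gamma f0 f1 d ∧ 1 ≤ n ∧ (F f0 f1)^[n] X = X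

/-- Hyperbolic periodic point (the multiplier is different from 1). -/
def IsHypPerPt (f0 f1 df0 df1 : ℝ → ℝ) (d : ℝ) (X : Seq2 × ℝ) : Prop :=
  ∃ n, IsPerPt f0 f1 d X n ∧ fIterDeriv f0 f1 df0 df1 X.1 n X.2 ≠ 1

/-- Hyperbolic periodic point of expanding type. -/
def IsExpPerPt (f0 f1 df0 df1 : ℝ → ℝ) (d : ℝ) (X : Seq2 × ℝ) : Prop :=
  ∃ n, IsPerPt f0 f1 d X n ∧ 1 < fIterDeriv f0 f1 df0 df1 X.1 n X.2

/-- Hyperbolic periodic point of contracting type. -/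
def IsConPerPt (f0 f1 df0 df1 : ℝ → ℝ) (d : ℝ) (X : Seq2 × ℝ) : Prop :=
  ∃ n, IsPerPt f0 f1 d X n ∧ 0 < fIterDeriv f0 f1 df0 df1 X.1 n X.2 ∧
    fIterDeriv f0 f1 df0 df1 X.1 n X.2 < 1

/-- Parabolic periodic point (multiplier 1). -/
def IsParPerPt (f0 f1 df0 df1 : ℝ → ℝ) (d : ℝ) (X : Seq2 × ℝ) : Prop :=
  ∃ n, IsPerPt f0 f1 d X n ∧ fIterDeriv f0 f1 df0 df1 X.1 n X.2 = 1

/-- The stable set `W^s(R, F)` of a point, for `F : Γ → Γ`. -/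
def Ws (f0 f1 : ℝ → ℝ) (d : ℝ) (R : Seq2 × ℝ) : Set (Seq2 × ℝ) :=
  { X | (∀ k : ℕ, (F f0 f1)^[k] X ∈ Gamma f0 f1 d) ∧
      Tendsto (fun k => (F f0 f1)^[k] X) atTop (nhds R) }

/-- The unstable set `W^u(R, F) = W^s(R, F⁻¹)` of a point, for `F : Γ → Γ`. -/
def Wu (f0 f1 : ℝ → ℝ) (d : ℝ) (R : Seq2 × ℝ) : Set (Seq2 × ℝ) :=
  { X | ∃ Z : ℕ → Seq2 × ℝ, Z 0 = X ∧
      (∀ m : ℕ, Z m ∈ Gamma f0 f1 d ∧ F f0 f1 (Z (m + 1)) = Z m) ∧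
      Tendsto Z atTop (nhds R) }

/-- The stable set of the orbit of `R`. -/
def WsOrbit (f0 f1 : ℝ → ℝ) (d : ℝ) (R : Seq2 × ℝ) : Set (Seq2 × ℝ) :=
  ⋃ j : ℕ, Ws f0 f1 d ((F f0 f1)^[j] R)

/-- The unstable set of the orbit of `R`. -/
def WuOrbit (f0 f1 : ℝ → ℝ) (d : ℝ) (R : Seq2 × ℝ) : Set (Seq2 × ℝ) :=
  ⋃ j : ℕ, Wu f0 f1 d ((F f0 f1)^[j] R)

/-- The homoclinic class `H(R,F)`. -/
def homClass (f0 f1 : ℝ → ℝ) (d : ℝ) (R : Seq2 × ℝ) : Set (Seq2 × ℝ) :=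
  closure (WsOrbit f0 f1 d R ∩ WuOrbit f0 f1 d R)

/-- `R₁` and `R₂` are homoclinically related. -/
def HomRel (f0 f1 : ℝ → ℝ) (d : ℝ) (R₁ R₂ : Seq2 × ℝ) : Prop :=
  (WsOrbit f0 f1 d R₁ ∩ WuOrbit f0 f1 d R₂).Nonempty ∧
  (WuOrbit f0 f1 d R₁ ∩ WsOrbit f0 f1 d R₂).Nonempty

/-- A set is (fiber) hyperbolic of expanding type. -/
def IsHypExpanding (f0 f1 df0 df1 : ℝ → ℝ) (Λ : Set (Seq2 × ℝ)) : Prop :=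
  ∃ C : ℝ, 0 < C ∧ ∃ α : ℝ, 0 < α ∧ ∀ p ∈ Λ, ∀ n : ℕ, 1 ≤ n →
    C * Real.exp (α * n) ≤ fIterDeriv f0 f1 df0 df1 p.1 n p.2

/-- A set is (fiber) hyperbolic of contracting type (backward iterates expand). -/
def IsHypContracting (f0 f1 df0 df1 : ℝ → ℝ) (d : ℝ) (Λ : Set (Seq2 × ℝ)) : Prop :=
  ∃ C : ℝ, 0 < C ∧ ∃ α : ℝ, 0 < α ∧ ∀ p ∈ Λ, ∀ Z : ℕ → Seq2 × ℝ, Z 0 = p →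
    (∀ m : ℕ, Z m ∈ Gamma f0 f1 d ∧ F f0 f1 (Z (m + 1)) = Z m) →
    ∀ n : ℕ, 1 ≤ n → fIterDeriv f0 f1 df0 df1 (Z n).1 n (Z n).2 ≤ C * Real.exp (-(α * n))

/-- The nonwandering set `Ω(Γ, F)` of `F : Γ → Γ`. -/
def nonwandering (f0 f1 : ℝ → ℝ) (d : ℝ) : Set (Seq2 × ℝ) :=
  { X | X ∈ Gamma f0 f1 d ∧ ∀ U : Set (Seq2 × ℝ), IsOpen U → X ∈ U →
      ∃ n : ℕ, 1 ≤ n ∧ ∃ Y ∈ U ∩ Gamma f0 f1 d, (F f0 f1)^[n] Y ∈ U ∩ Gamma f0 f1 d }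

/-- The finite word `w` occurs in the sequence `ξ`. -/
def OccursIn (w : List (Fin 2)) (ξ : Seq2) : Prop :=
  ∃ k : ℤ, ∀ i : ℕ, i < w.length → ξ (k + (i : ℤ)) = w.getD i 0

/-- The set `Σ^het` of heteroclinic admissible sequences. -/
def SigmaHet (f0 f1 : ℝ → ℝ) (d : ℝ) : Set Seq2 :=
  { ξ | ξ ∈ SigmaA f0 f1 d ∧ ∃ k : ℤ, ∃ w : List (Fin 2),
      (∀ m : ℤ, m < k → ξ m = 0) ∧
      (∀ i : ℕ, i < w.length → ξ (k + (i : ℤ)) = w.getD i 0) ∧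
      (∀ m : ℤ, k + (w.length : ℤ) ≤ m → ξ m = 0) ∧
      fWord f0 f1 w 1 = 0 }

/-- `Σ^cod = Σ ∖ Σ^het`. -/
def SigmaCod (f0 f1 : ℝ → ℝ) (d : ℝ) : Set Seq2 := SigmaA f0 f1 d \ SigmaHet f0 f1 d

/-- `Γ^cod = π⁻¹(Σ^cod) ∩ Γ`. -/
def GammaCod (f0 f1 : ℝ → ℝ) (d : ℝ) : Set (Seq2 × ℝ) :=
  { p ∈ Gamma f0 f1 d | p.1 ∈ SigmaCod f0 f1 d }

/-- `Σ^sing`: sequences whose spine is a singleton. -/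
def SigmaSing (f0 f1 : ℝ → ℝ) (d : ℝ) : Set Seq2 :=
  { ξ | ξ ∈ SigmaA f0 f1 d ∧ (Ifiber f0 f1 d ξ).Subsingleton }

/-- `Σ^spine`: sequences whose spine is a nondegenerate interval. -/
def SigmaSpine (f0 f1 : ℝ → ℝ) (d : ℝ) : Set Seq2 :=
  { ξ | ξ ∈ SigmaA f0 f1 d ∧ ¬ (Ifiber f0 f1 d ξ).Subsingleton }

/-- `T` restricted to `S` is topologically transitive. -/
def TransOn {α : Type*} [TopologicalSpace α] (T : α → α) (S : Set α) : Prop :=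
  ∀ U V : Set α, IsOpen U → IsOpen V → (U ∩ S).Nonempty → (V ∩ S).Nonempty →
    ∃ n : ℕ, 1 ≤ n ∧ (T^[n] '' (U ∩ S) ∩ (V ∩ S)).Nonempty

/-- `T` restricted to `S` is topologically mixing. -/
def MixOn {α : Type*} [TopologicalSpace α] (T : α → α) (S : Set α) : Prop :=
  ∀ U V : Set α, IsOpen U → IsOpen V → (U ∩ S).Nonempty → (V ∩ S).Nonempty →
    ∃ N : ℕ, ∀ n : ℕ, N ≤ n → (T^[n] '' (U ∩ S) ∩ (V ∩ S)).Nonempty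

/-- A subshift of finite type: the sequences avoiding a finite list of forbidden words. -/
def IsSFT (S : Set Seq2) : Prop :=
  ∃ Fw : Finset (List (Fin 2)), S = { ξ | ∀ w ∈ Fw, ¬ OccursIn w ξ }

/-- Number of words of length `n` appearing in sequences of `S`. -/
noncomputable def wordCount (S : Set Seq2) (n : ℕ) : ℕ :=
  Nat.card { w : List (Fin 2) // w.length = n ∧ ∃ ξ ∈ S, OccursIn w ξ }

/-- Topological entropy of the shift on a subshift `S`, as exponential growth rate of
the number of words. -/
noncomputable def subshiftEntropy (S : Set Seq2) : ℝ :=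
  Filter.limsup (fun n : ℕ => Real.log (wordCount S n) / n) Filter.atTop

/-- `Λ` is `F`-invariant. -/
def IsInvariantSet (f0 f1 : ℝ → ℝ) (Λ : Set (Seq2 × ℝ)) : Prop := F f0 f1 '' Λ = Λ

/-- `Λ` is locally maximal: it is the set of full orbits inside some neighborhood. -/
def IsLocallyMaximal (f0 f1 : ℝ → ℝ) (Λ : Set (Seq2 × ℝ)) : Prop :=
  ∃ V : Set (Seq2 × ℝ), IsOpen V ∧ Λ ⊆ V ∧
    Λ = { X | ∃ Z : ℤ → Seq2 × ℝ, Z 0 = X ∧ (∀ n : ℤ, Z (n + 1) = F f0 f1 (Z n)) ∧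
      ∀ n : ℤ, Z n ∈ V }

/-- Basic set with uniform fiber expansion. -/
def IsBasicExp (f0 f1 df0 df1 : ℝ → ℝ) (d : ℝ) (Λ : Set (Seq2 × ℝ)) : Prop :=
  Λ ⊆ Gamma f0 f1 d ∧ IsCompact Λ ∧ IsInvariantSet f0 f1 Λ ∧ IsLocallyMaximal f0 f1 Λ ∧
  TransOn (F f0 f1) Λ ∧ IsHypExpanding f0 f1 df0 df1 Λ

/-- Basic set with uniform fiber contraction. -/
def IsBasicCon (f0 f1 df0 df1 : ℝ → ℝ) (d : ℝ) (Λ : Set (Seq2 × ℝ)) : Prop :=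
  Λ ⊆ Gamma f0 f1 d ∧ IsCompact Λ ∧ IsInvariantSet f0 f1 Λ ∧ IsLocallyMaximal f0 f1 Λ ∧
  TransOn (F f0 f1) Λ ∧ IsHypContracting f0 f1 df0 df1 d Λ

/-- The entropy function `𝓗(p) = -p log p - (1-p) log (1-p)`. -/
noncomputable def entH (p : ℝ) : ℝ := -(p * Real.log p) - (1 - p) * Real.log (1 - p)

section Lemmas

variable {f0 f1 df0 df1 : ℝ → ℝ} {d : ℝ}

/-- shorthand for the applied map -/
def fi (f0 f1 : ℝ → ℝ) (i : Fin 2) : ℝ → ℝ := if i = 0 then f0 else f1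

lemma fin2_cases (i : Fin 2) : i = 0 ∨ i = 1 := by omega

lemma cont0 (H : H1 f0 f1 df0 df1 d) : Continuous f0 :=
  continuous_iff_continuousAt.2 fun x => (H.hasDeriv0 x).continuousAt

lemma cont1 (H : H1 f0 f1 df0 df1 d) : Continuous f1 :=
  continuous_iff_continuousAt.2 fun x => (H.hasDeriv1 x).continuousAt

lemma d_pos (H : H1 f0 f1 df0 df1 d) : 0 < d := H.d_mem.1
lemma d_lt_one (H : H1 f0 f1 df0 df1 d) : d < 1 := H.d_mem.2

lemma f0_zero (H : H1 f0 f1 df0 df1 d) : f0 0 = 0 := by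
  obtain ⟨t, ht, hft⟩ := H.surj0 (show (0:ℝ) ∈ Icc (0:ℝ) 1 by simp)
  have h1 : f0 0 ≤ f0 t := H.mono0.monotone ht.1
  have h2 : (0:ℝ) ≤ f0 0 := (H.maps0 (by simp : (0:ℝ) ∈ Icc (0:ℝ) 1)).1
  rw [hft] at h1; linarith

lemma f0_one (H : H1 f0 f1 df0 df1 d) : f0 1 = 1 := by
  obtain ⟨t, ht, hft⟩ := H.surj0 (show (1:ℝ) ∈ Icc (0:ℝ) 1 by simp)
  have h1 : f0 t ≤ f0 1 := H.mono0.monotone ht.2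
  have h2 : f0 1 ≤ 1 := (H.maps0 (by simp : (1:ℝ) ∈ Icc (0:ℝ) 1)).2
  rw [hft] at h1; linarith

lemma f0_le_one (H : H1 f0 f1 df0 df1 d) {x : ℝ} (hx : x ≤ 1) : f0 x ≤ 1 := by
  have := H.mono0.monotone hx; rw [f0_one H] at this; exact this

lemma f1_lt_one (H : H1 f0 f1 df0 df1 d) {x : ℝ} (hx : x ≤ 1) : f1 x < 1 := by
  have h1 : f1 x ≤ f1 1 := H.mono1.monotone hx
  have h2 : f1 1 < 1 := H.f1_below 1 ⟨(d_lt_one H).le, le_refl _⟩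
  linarith

lemma f1_d (H : H1 f0 f1 df0 df1 d) : f1 d = 0 := H.f1_d

lemma f0_pos (H : H1 f0 f1 df0 df1 d) {x : ℝ} (hx : 0 < x) : 0 < f0 x := by
  have := H.mono0 hx; rwa [f0_zero H] at this

lemma f0_self_le (H : H1 f0 f1 df0 df1 d) {x : ℝ} (hx : x ∈ Icc (0:ℝ) 1) : x ≤ f0 x := by
  rcases eq_or_lt_of_le hx.1 with h | h
  · rw [← h, f0_zero H]
  rcases eq_or_lt_of_le hx.2 with h' | h'
  · rw [h', f0_one H]
  · exact (H.f0_above x ⟨h, h'⟩).le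

lemma fi_mono (H : H1 f0 f1 df0 df1 d) (i : Fin 2) : StrictMono (fi f0 f1 i) := by
  unfold fi; split <;> [exact H.mono0; exact H.mono1]

lemma fi_cont (H : H1 f0 f1 df0 df1 d) (i : Fin 2) : Continuous (fi f0 f1 i) := by
  unfold fi; split <;> [exact cont0 H; exact cont1 H]

lemma fi_le_one (H : H1 f0 f1 df0 df1 d) (i : Fin 2) {x : ℝ} (hx : x ≤ 1) :
    fi f0 f1 i x ≤ 1 := by
  unfold fi; split
  · exact f0_le_one H hx
  · exact (f1_lt_one H hx).le

lemma fi_zero : fi f0 f1 0 = f0 := by unfold fi; simp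

lemma fi_one : fi f0 f1 1 = f1 := by unfold fi; rw [if_neg (by decide)]

/-! ### words -/

lemma fWord_nil (x : ℝ) : fWord f0 f1 [] x = x := rfl

lemma fWord_cons (i : Fin 2) (w : List (Fin 2)) (x : ℝ) :
    fWord f0 f1 (i :: w) x = fWord f0 f1 w (fi f0 f1 i x) := rfl

lemma fWord_singleton (i : Fin 2) (x : ℝ) : fWord f0 f1 [i] x = fi f0 f1 i x := rfl

lemma fWord_append (w1 w2 : List (Fin 2)) (x : ℝ) :
    fWord f0 f1 (w1 ++ w2) x = fWord f0 f1 w2 (fWord f0 f1 w1 x) := by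
  induction w1 generalizing x with
  | nil => rfl
  | cons i w ih => simp [fWord_cons, ih]

lemma fWord_mono (H : H1 f0 f1 df0 df1 d) (w : List (Fin 2)) : StrictMono (fWord f0 f1 w) := by
  induction w with
  | nil => exact strictMono_id
  | cons i w ih => exact fun a b hab => ih (fi_mono H i hab)

lemma fWord_cont (H : H1 f0 f1 df0 df1 d) (w : List (Fin 2)) : Continuous (fWord f0 f1 w) := by
  induction w with
  | nil => exact continuous_id
  | cons i w ih => exact ih.comp (fi_cont H i)

/-! ### wordAdm -/

lemma wordAdm_nil (x : ℝ) : wordAdm f0 f1 d [] x ↔ x ∈ Icc (0:ℝ) 1 := Iff.rfl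

lemma wordAdm_cons (i : Fin 2) (w : List (Fin 2)) (x : ℝ) :
    wordAdm f0 f1 d (i :: w) x ↔
      (x ∈ Icc (0:ℝ) 1 ∧ (i = 1 → d ≤ x) ∧ wordAdm f0 f1 d w (fi f0 f1 i x)) := Iff.rfl

lemma wordAdm_mem {w : List (Fin 2)} {x : ℝ} (h : wordAdm f0 f1 d w x) : x ∈ Icc (0:ℝ) 1 := by
  cases w with
  | nil => exact h
  | cons i w => exact h.1

lemma wordAdm_val_mem {w : List (Fin 2)} {x : ℝ} (h : wordAdm f0 f1 d w x) :
    fWord f0 f1 w x ∈ Icc (0:ℝ) 1 := by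
  induction w generalizing x with
  | nil => exact h
  | cons i w ih => exact ih h.2.2

lemma wordAdm_append {w1 w2 : List (Fin 2)} {x : ℝ} :
    wordAdm f0 f1 d (w1 ++ w2) x ↔
      wordAdm f0 f1 d w1 x ∧ wordAdm f0 f1 d w2 (fWord f0 f1 w1 x) := by
  induction w1 generalizing x with
  | nil =>
    simp only [List.nil_append, fWord_nil, wordAdm_nil]
    exact ⟨fun h => ⟨wordAdm_mem h, h⟩, fun h => h.2⟩
  | cons i w ih =>
    simp only [List.cons_append, wordAdm_cons, fWord_cons, ih, and_assoc]

lemma wordAdm_mono (H : H1 f0 f1 df0 df1 d) {w : List (Fin 2)} {x y : ℝ}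
    (h : wordAdm f0 f1 d w x) (hxy : x ≤ y) (hy : y ≤ 1) : wordAdm f0 f1 d w y := by
  induction w generalizing x y with
  | nil => exact ⟨le_trans h.1 hxy, hy⟩
  | cons i w ih =>
    exact ⟨⟨le_trans h.1.1 hxy, hy⟩, fun hi => le_trans (h.2.1 hi) hxy,
      ih h.2.2 ((fi_mono H i).monotone hxy) (fi_le_one H i hy)⟩

lemma IWord_bddBelow (w : List (Fin 2)) : BddBelow (IWord f0 f1 d w) :=
  ⟨0, fun x hx => (wordAdm_mem hx).1⟩

lemma IWord_closed (H : H1 f0 f1 df0 df1 d) (w : List (Fin 2)) :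
    IsClosed (IWord f0 f1 d w) := by
  induction w with
  | nil => exact isClosed_Icc
  | cons i w ih =>
    have : IWord f0 f1 d (i :: w) =
        (Icc (0:ℝ) 1 ∩ {x | i = 1 → d ≤ x}) ∩ (fi f0 f1 i) ⁻¹' IWord f0 f1 d w := by
      ext x; simp only [IWord, mem_setOf_eq, wordAdm_cons, mem_inter_iff, mem_preimage]
      tauto
    rw [this]
    refine IsClosed.inter (isClosed_Icc.inter ?_) (ih.preimage (fi_cont H i))
    by_cases hi : i = 1
    · simp only [hi, forall_true_left]; exact isClosed_Ici
    · have : {x : ℝ | i = 1 → d ≤ x} = univ := by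
        ext x; simp [hi]
      rw [this]; exact isClosed_univ

lemma aWord_mem (H : H1 f0 f1 df0 df1 d) {w : List (Fin 2)} (hne : (IWord f0 f1 d w).Nonempty) :
    aWord f0 f1 d w ∈ IWord f0 f1 d w :=
  (IWord_closed H w).csInf_mem hne (IWord_bddBelow w)

lemma aWord_le (H : H1 f0 f1 df0 df1 d) {w : List (Fin 2)} {x : ℝ}
    (hx : x ∈ IWord f0 f1 d w) : aWord f0 f1 d w ≤ x :=
  csInf_le (IWord_bddBelow w) hx

lemma IWord_eq_Icc (H : H1 f0 f1 df0 df1 d) {w : List (Fin 2)}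
    (hne : (IWord f0 f1 d w).Nonempty) :
    IWord f0 f1 d w = Icc (aWord f0 f1 d w) 1 := by
  ext x
  constructor
  · intro hx; exact ⟨aWord_le H hx, (wordAdm_mem hx).2⟩
  · intro hx; exact wordAdm_mono H (aWord_mem H hne) hx.1 hx.2

end Lemmas
section Lemmas2

variable {f0 f1 df0 df1 : ℝ → ℝ} {d : ℝ}

lemma fWord_aWord (H : H1 f0 f1 df0 df1 d) {w : List (Fin 2)}
    (hne : (IWord f0 f1 d w).Nonempty) : fWord f0 f1 w (aWord f0 f1 d w) = 0 := by
  induction w with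
  | nil =>
    have : IWord f0 f1 d ([] : List (Fin 2)) = Icc (0:ℝ) 1 := rfl
    simp [fWord_nil, aWord, this, csInf_Icc (zero_le_one)]
  | cons i w ih =>
    set A := aWord f0 f1 d (i :: w) with hA
    have hAmem : wordAdm f0 f1 d (i :: w) A := aWord_mem H hne
    obtain ⟨hIcc, hd, htail⟩ := hAmem
    have hne' : (IWord f0 f1 d w).Nonempty := ⟨_, htail⟩
    set a' := aWord f0 f1 d w with ha'
    have ha'mem := aWord_mem H hne'
    have ha'Icc := wordAdm_mem ha'mem
    have hIH := ih hne'
    have hle : a' ≤ fi f0 f1 i A := aWord_le H htail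
    rw [fWord_cons]
    rcases fin2_cases i with hi | hi
    · -- i = 0
      subst hi
      have hfi : fi f0 f1 0 = f0 := by unfold fi; simp
      rw [hfi] at hle ⊢
      rcases eq_or_lt_of_le hIcc.1 with h0 | h0
      · -- A = 0
        have hfa0 : f0 A = 0 := by rw [← h0, f0_zero H]
        have ha0 : a' = 0 := le_antisymm (by rw [← hfa0]; exact hle) ha'Icc.1
        have : f0 A = a' := by rw [hfa0, ha0]
        rw [this]; exact hIH
      · -- 0 < A
        have hkey : f0 A = a' := by
          by_contra hne2
          have hlt : a' < f0 A := lt_of_le_of_ne hle (Ne.symm hne2)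
          have hIVT : Icc (f0 0) (f0 A) ⊆ f0 '' Icc 0 A :=
            intermediate_value_Icc h0.le (cont0 H).continuousOn
          obtain ⟨c, hc, hfc⟩ := hIVT ⟨by rw [f0_zero H]; exact ha'Icc.1, hlt.le⟩
          have hcmem : c ∈ IWord f0 f1 d (0 :: w) := by
            refine ⟨⟨hc.1, le_trans hc.2 hIcc.2⟩, by simp, ?_⟩
            have heq : (if (0:Fin 2) = 0 then f0 else f1) c = a' := by
              rw [if_pos rfl]; exact hfc
            exact heq ▸ ha'mem
          have hAc : A ≤ c := aWord_le H hcmem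
          have : c = A := le_antisymm hc.2 hAc
          rw [this] at hfc
          exact hne2 hfc
        rw [hkey, hIH]
    · -- i = 1
      subst hi
      have hfi : fi f0 f1 1 = f1 := by unfold fi; simp
      rw [hfi] at hle ⊢
      have hdA : d ≤ A := hd rfl
      rcases eq_or_lt_of_le hdA with h0 | h0
      · have hfa0 : f1 A = 0 := by rw [← h0, f1_d H]
        have ha0 : a' = 0 := le_antisymm (by rw [← hfa0]; exact hle) ha'Icc.1
        have : f1 A = a' := by rw [hfa0, ha0]
        rw [this]; exact hIH
      · have hkey : f1 A = a' := by
          by_contra hne2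
          have hlt : a' < f1 A := lt_of_le_of_ne hle (Ne.symm hne2)
          have hIVT : Icc (f1 d) (f1 A) ⊆ f1 '' Icc d A :=
            intermediate_value_Icc h0.le (cont1 H).continuousOn
          obtain ⟨c, hc, hfc⟩ := hIVT ⟨by rw [f1_d H]; exact ha'Icc.1, hlt.le⟩
          have hcmem : c ∈ IWord f0 f1 d (1 :: w) := by
            refine ⟨⟨le_trans (d_pos H).le hc.1, le_trans hc.2 hIcc.2⟩, fun _ => hc.1, ?_⟩
            have heq : (if (1:Fin 2) = 0 then f0 else f1) c = a' := by
              rw [if_neg (by decide)]; exact hfc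
            exact heq ▸ ha'mem
          have hAc : A ≤ c := aWord_le H hcmem
          have : c = A := le_antisymm hc.2 hAc
          rw [this] at hfc
          exact hne2 hfc
        rw [hkey, hIH]

/-! ### seqWord -/

lemma seqWord_zero (ξ : Seq2) (a : ℤ) : seqWord ξ a 0 = [] := rfl

lemma seqWord_length (ξ : Seq2) (a : ℤ) (n : ℕ) : (seqWord ξ a n).length = n := by
  simp [seqWord]

lemma seqWord_succ_left (ξ : Seq2) (a : ℤ) (n : ℕ) :
    seqWord ξ a (n + 1) = ξ a :: seqWord ξ (a + 1) n := by
  simp only [seqWord, List.ofFn_succ]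
  have hf : (fun i : Fin n => ξ (a + ↑↑i.succ)) = (fun i : Fin n => ξ (a + 1 + ↑↑i)) := by
    funext i; congr 1; simp [Fin.val_succ]; omega
  rw [hf]
  norm_num

lemma seqWord_succ_right (ξ : Seq2) (a : ℤ) (n : ℕ) :
    seqWord ξ a (n + 1) = seqWord ξ a n ++ [ξ (a + n)] := by
  simp only [seqWord, List.ofFn_succ', Fin.coe_castSucc, Fin.val_last, List.concat_eq_append]

lemma seqWord_add (ξ : Seq2) (a : ℤ) (m n : ℕ) :
    seqWord ξ a (m + n) = seqWord ξ a m ++ seqWord ξ (a + m) n := by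
  induction n with
  | zero => simp [seqWord_zero]
  | succ n ih =>
    rw [show m + (n+1) = (m + n) + 1 by omega, seqWord_succ_right, ih, seqWord_succ_right,
      List.append_assoc]
    congr 3
    congr 1; push_cast; omega

lemma seqWord_congr {ξ η : Seq2} {a : ℤ} {n : ℕ}
    (h : ∀ m : ℤ, a ≤ m → m < a + n → ξ m = η m) : seqWord ξ a n = seqWord η a n := by
  simp only [seqWord]
  congr 1
  funext i
  exact h _ (by omega) (by have := i.2; omega)

lemma seqWord_getD (ξ : Seq2) (a : ℤ) (n : ℕ) (i : ℕ) (hi : i < n) :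
    (seqWord ξ a n).getD i 0 = ξ (a + i) := by
  rw [List.getD_eq_getElem _ _ (by simpa [seqWord_length] using hi)]
  simp [seqWord]

/-! ### fIter bridge -/

lemma fIter_succ (ξ : Seq2) (n : ℕ) (x : ℝ) :
    fIter f0 f1 ξ (n + 1) x = fi f0 f1 (ξ (n : ℤ)) (fIter f0 f1 ξ n x) := rfl

lemma fIter_eq_fWord (ξ : Seq2) (n : ℕ) (x : ℝ) :
    fIter f0 f1 ξ n x = fWord f0 f1 (seqWord ξ 0 n) x := by
  induction n with
  | zero => rfl
  | succ n ih =>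
    rw [fIter_succ, ih, seqWord_succ_right, fWord_append, zero_add, fWord_singleton]

lemma forwardAdmissible_iff (H : H1 f0 f1 df0 df1 d) {ξ : Seq2} {x : ℝ} :
    forwardAdmissible f0 f1 d ξ x ↔ ∀ n : ℕ, wordAdm f0 f1 d (seqWord ξ 0 n) x := by
  constructor
  · intro h n
    induction n with
    | zero => exact (h 0).1
    | succ n ih =>
      rw [seqWord_succ_right, wordAdm_append]
      refine ⟨ih, ?_⟩
      rw [zero_add]
      refine ⟨by rw [← fIter_eq_fWord]; exact (h n).1, ?_, ?_⟩
      · intro hn; rw [← fIter_eq_fWord]; exact (h n).2 hn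
      · show (if ξ (n:ℤ) = 0 then f0 else f1) (fWord f0 f1 (seqWord ξ 0 n) x) ∈ Icc (0:ℝ) 1
        rw [← fIter_eq_fWord]
        exact (h (n+1)).1
  · intro h n
    constructor
    · rw [fIter_eq_fWord]; exact wordAdm_val_mem (h n)
    · intro hn
      have := h (n + 1)
      rw [seqWord_succ_right, wordAdm_append, zero_add] at this
      rw [fIter_eq_fWord]
      exact this.2.2.1 hn

end Lemmas2
section Lemmas3

variable {f0 f1 df0 df1 : ℝ → ℝ} {d : ℝ}

/-- A backward chain (the body of `backwardAdmissible` without the anchor). -/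
def BChain (f0 f1 : ℝ → ℝ) (d : ℝ) (ξ : Seq2) (y : ℕ → ℝ) : Prop :=
  ∀ m : ℕ, y m ∈ Icc (0:ℝ) 1 ∧
    (ξ (-(m : ℤ) - 1) = 0 → f0 (y (m + 1)) = y m) ∧
    (ξ (-(m : ℤ) - 1) = 1 → d ≤ y (m + 1) ∧ f1 (y (m + 1)) = y m)

lemma backwardAdmissible_iff_bchain {ξ : Seq2} {x : ℝ} :
    backwardAdmissible f0 f1 d ξ x ↔ ∃ y, y 0 = x ∧ BChain f0 f1 d ξ y := Iff.rfl

lemma bchain_step {ξ : Seq2} {y : ℕ → ℝ} (hy : BChain f0 f1 d ξ y) (m : ℕ) :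
    (if ξ (-(m : ℤ) - 1) = 0 then f0 else f1) (y (m + 1)) = y m := by
  rcases fin2_cases (ξ (-(m : ℤ) - 1)) with h | h
  · rw [h, if_pos rfl]; exact ((hy m).2.1 h)
  · rw [h, if_neg (by decide)]; exact ((hy m).2.2 h).2

/-- the word along a backward chain is admissible and transports the chain. -/
lemma bchain_wordAdm (H : H1 f0 f1 df0 df1 d) {ξ : Seq2} {y : ℕ → ℝ}
    (hy : BChain f0 f1 d ξ y) (a : ℕ) :
    ∀ M : ℕ, wordAdm f0 f1 d (seqWord ξ (-(a:ℤ) - M) M) (y (a + M)) ∧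
      fWord f0 f1 (seqWord ξ (-(a:ℤ) - M) M) (y (a + M)) = y a := by
  intro M
  induction M with
  | zero =>
    constructor
    · exact (hy a).1
    · rfl
  | succ M ih =>
    have hsw : seqWord ξ (-(a:ℤ) - (M+1:ℕ)) (M + 1) =
        ξ (-(a:ℤ) - (M:ℕ) - 1) :: seqWord ξ (-(a:ℤ) - M) M := by
      rw [seqWord_succ_left]
      congr 1
      · congr 1; push_cast; ring
      · congr 1; push_cast; ring
    have hidx : -((a + M : ℕ) : ℤ) - 1 = -(a:ℤ) - (M:ℕ) - 1 := by push_cast; ring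
    have hstep : (if ξ (-(a:ℤ) - (M:ℕ) - 1) = 0 then f0 else f1) (y (a + M + 1))
        = y (a + M) := by
      rw [← hidx]; exact bchain_step hy (a + M)
    constructor
    · rw [hsw, wordAdm_cons]
      refine ⟨(hy (a + M + 1)).1, ?_, ?_⟩
      · intro h1
        exact (((hy (a + M)).2.2 (by rw [hidx]; exact h1))).1
      · show wordAdm f0 f1 d _ ((if ξ (-(a:ℤ) - (M:ℕ) - 1) = 0 then f0 else f1) (y (a + (M+1))))
        rw [show a + (M + 1) = a + M + 1 by omega, hstep]
        exact ih.1
    · rw [hsw, fWord_cons]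
      show fWord f0 f1 _ ((if ξ (-(a:ℤ) - (M:ℕ) - 1) = 0 then f0 else f1) (y (a + (M+1)))) = y a
      rw [show a + (M + 1) = a + M + 1 by omega, hstep]
      exact ih.2

/-- `t' a M`: push `1` from time `-(a+M)` to time `-a`. -/
noncomputable def tprime (f0 f1 : ℝ → ℝ) (ξ : Seq2) (a M : ℕ) : ℝ :=
  fWord f0 f1 (seqWord ξ (-(a:ℤ) - M) M) 1

section withGamma

variable {ξ : Seq2} {x₀ : ℝ} {y : ℕ → ℝ}

lemma wordAdm_one (H : H1 f0 f1 df0 df1 d) (hy : BChain f0 f1 d ξ y) (a M : ℕ) :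
    wordAdm f0 f1 d (seqWord ξ (-(a:ℤ) - M) M) 1 :=
  wordAdm_mono H (bchain_wordAdm H hy a M).1 (hy (a + M)).1.2 le_rfl

lemma tprime_mem (H : H1 f0 f1 df0 df1 d) (hy : BChain f0 f1 d ξ y) (a M : ℕ) :
    tprime f0 f1 ξ a M ∈ Icc (0:ℝ) 1 :=
  wordAdm_val_mem (wordAdm_one H hy a M)

lemma tprime_step (H : H1 f0 f1 df0 df1 d) (ξ : Seq2) (a M : ℕ) :
    tprime f0 f1 ξ a (M + 1) =
      (if ξ (-(a:ℤ) - 1) = 0 then f0 else f1) (tprime f0 f1 ξ (a+1) M) := by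
  unfold tprime
  have hsw : seqWord ξ (-(a:ℤ) - (M+1:ℕ)) (M + 1) =
      seqWord ξ (-((a:ℤ)+1) - M) M ++ [ξ (-(a:ℤ) - 1)] := by
    rw [seqWord_succ_right]
    congr 1
    · congr 1; push_cast; ring
    · congr 2; push_cast; ring
  rw [hsw, fWord_append, fWord_singleton]
  unfold fi
  congr 2 <;> (push_cast; ring_nf)

lemma tprime_antitone (H : H1 f0 f1 df0 df1 d) (hy : BChain f0 f1 d ξ y) (a : ℕ) :
    Antitone (tprime f0 f1 ξ a) := by
  apply antitone_nat_of_succ_le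
  intro M
  unfold tprime
  have hsw : seqWord ξ (-(a:ℤ) - (M+1:ℕ)) (M + 1) =
      ξ (-(a:ℤ) - (M:ℕ) - 1) :: seqWord ξ (-(a:ℤ) - M) M := by
    rw [seqWord_succ_left]
    congr 1
    · congr 1; push_cast; ring
    · congr 1; push_cast; ring
  rw [hsw, fWord_cons]
  exact (fWord_mono H _).monotone (fi_le_one H _ le_rfl)

lemma tprime_d (H : H1 f0 f1 df0 df1 d) (hy : BChain f0 f1 d ξ y) (a M : ℕ)
    (h1 : ξ (-(a:ℤ) - 1) = 1) : d ≤ tprime f0 f1 ξ (a+1) M := by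
  have hadm := wordAdm_one H hy a (M + 1)
  have hsw : seqWord ξ (-(a:ℤ) - (M+1:ℕ)) (M + 1) =
      seqWord ξ (-((a:ℤ)+1) - M) M ++ [ξ (-(a:ℤ) - 1)] := by
    rw [seqWord_succ_right]
    congr 1
    · congr 1; push_cast; ring
    · congr 2; push_cast; ring
  rw [hsw, wordAdm_append] at hadm
  have := hadm.2.2.1 h1
  unfold tprime
  convert this using 3 <;> (push_cast; ring_nf)

noncomputable def ylimit (f0 f1 : ℝ → ℝ) (ξ : Seq2) (a : ℕ) : ℝ := ⨅ M, tprime f0 f1 ξ a M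

lemma tendsto_tprime (H : H1 f0 f1 df0 df1 d) (hy : BChain f0 f1 d ξ y) (a : ℕ) :
    Tendsto (tprime f0 f1 ξ a) atTop (nhds (ylimit f0 f1 ξ a)) :=
  tendsto_atTop_ciInf (tprime_antitone H hy a)
    ⟨0, by rintro t ⟨M, rfl⟩; exact (tprime_mem H hy a M).1⟩

lemma ylimit_mem (H : H1 f0 f1 df0 df1 d) (hy : BChain f0 f1 d ξ y) (a : ℕ) :
    ylimit f0 f1 ξ a ∈ Icc (0:ℝ) 1 := by
  constructor
  · exact ge_of_tendsto (tendsto_tprime H hy a)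
      (Eventually.of_forall fun M => (tprime_mem H hy a M).1)
  · exact le_of_tendsto (tendsto_tprime H hy a)
      (Eventually.of_forall fun M => (tprime_mem H hy a M).2)

lemma ylimit_bchain (H : H1 f0 f1 df0 df1 d) (hy : BChain f0 f1 d ξ y) :
    BChain f0 f1 d ξ (ylimit f0 f1 ξ) := by
  intro a
  have hstep : (if ξ (-(a:ℤ) - 1) = 0 then f0 else f1) (ylimit f0 f1 ξ (a+1))
      = ylimit f0 f1 ξ a := by
    have hc : Continuous (if ξ (-(a:ℤ) - 1) = 0 then f0 else f1) := by
      split <;> [exact cont0 H; exact cont1 H]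
    have h1 : Tendsto (fun M => (if ξ (-(a:ℤ) - 1) = 0 then f0 else f1)
        (tprime f0 f1 ξ (a+1) M)) atTop
        (nhds ((if ξ (-(a:ℤ) - 1) = 0 then f0 else f1) (ylimit f0 f1 ξ (a+1)))) :=
      (hc.continuousAt).tendsto.comp (tendsto_tprime H hy (a+1))
    have h2 : Tendsto (fun M => tprime f0 f1 ξ a (M + 1)) atTop
        (nhds (ylimit f0 f1 ξ a)) :=
      (tendsto_add_atTop_iff_nat 1).2 (tendsto_tprime H hy a)
    refine tendsto_nhds_unique ?_ h2
    refine h1.congr fun M => ?_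
    rw [tprime_step H]
  refine ⟨ylimit_mem H hy a, ?_, ?_⟩
  · intro h0; rw [← hstep, if_pos h0]
  · intro h1
    constructor
    · refine le_ciInf fun M => tprime_d H hy a M h1
    · rw [← hstep, if_neg (by rw [h1]; decide)]

lemma mem_Iminus_le_tprime (H : H1 f0 f1 df0 df1 d) {x : ℝ}
    (hx : backwardAdmissible f0 f1 d ξ x) (M : ℕ) : x ≤ tprime f0 f1 ξ 0 M := by
  obtain ⟨y', hy'0, hy'⟩ := hx
  have h := (bchain_wordAdm H hy' 0 M).2
  rw [hy'0] at h
  rw [← h]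
  unfold tprime
  exact (fWord_mono H _).monotone (hy' (0 + M)).1.2

lemma xMinus_eq_ylimit (H : H1 f0 f1 df0 df1 d)
    (hx : backwardAdmissible f0 f1 d ξ x₀) :
    xMinus f0 f1 d ξ = ylimit f0 f1 ξ 0 := by
  obtain ⟨y', hy'0, hy'⟩ := hx
  have hmem : ylimit f0 f1 ξ 0 ∈ Iminus f0 f1 d ξ := ⟨ylimit f0 f1 ξ, rfl, ylimit_bchain H hy'⟩
  apply le_antisymm
  · apply csSup_le ⟨_, hmem⟩
    intro x hxm
    exact le_ciInf fun M => mem_Iminus_le_tprime H hxm M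
  · apply le_csSup ⟨1, ?_⟩ hmem
    rintro t ⟨y'', hy''0, hy''⟩
    rw [← hy''0]; exact (hy'' 0).1.2

lemma tendsto_xMinus (H : H1 f0 f1 df0 df1 d)
    (hx : backwardAdmissible f0 f1 d ξ x₀) :
    Tendsto (tprime f0 f1 ξ 0) atTop (nhds (xMinus f0 f1 d ξ)) := by
  obtain ⟨y', hy'0, hy'⟩ := hx
  rw [xMinus_eq_ylimit H ⟨y', hy'0, hy'⟩]
  exact tendsto_tprime H hy' 0

end withGamma

/-! ### xPlus -/

section xplus

variable {ξ : Seq2} {x₀ : ℝ}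

lemma Iplus_eq (H : H1 f0 f1 df0 df1 d) :
    Iplus f0 f1 d ξ = ⋂ n : ℕ, IWord f0 f1 d (seqWord ξ 0 n) := by
  ext x
  simp only [Iplus, mem_setOf_eq, mem_iInter]
  exact forwardAdmissible_iff H

lemma IWord_prefix_anti (H : H1 f0 f1 df0 df1 d) (ξ : Seq2) (n : ℕ) :
    IWord f0 f1 d (seqWord ξ 0 (n+1)) ⊆ IWord f0 f1 d (seqWord ξ 0 n) := by
  intro x hx
  rw [IWord, mem_setOf_eq, seqWord_succ_right, wordAdm_append] at hx
  exact hx.1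

lemma xPlus_eq (H : H1 f0 f1 df0 df1 d) (hx : forwardAdmissible f0 f1 d ξ x₀) :
    xPlus f0 f1 d ξ = ⨆ n : ℕ, aWord f0 f1 d (seqWord ξ 0 n) := by
  have hne : ∀ n, x₀ ∈ IWord f0 f1 d (seqWord ξ 0 n) := (forwardAdmissible_iff H).1 hx
  have hb : ∀ n, aWord f0 f1 d (seqWord ξ 0 n) ≤ x₀ := fun n => aWord_le H (hne n)
  have hx1 : x₀ ≤ 1 := (hx 0).1.2
  have hBdd : BddAbove (range fun n => aWord f0 f1 d (seqWord ξ 0 n)) :=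
    ⟨x₀, by rintro t ⟨n, rfl⟩; exact hb n⟩
  set L := ⨆ n : ℕ, aWord f0 f1 d (seqWord ξ 0 n) with hL
  have hLx : L ≤ x₀ := ciSup_le hb
  have hLmem : L ∈ Iplus f0 f1 d ξ := by
    rw [Iplus_eq H]
    refine mem_iInter.2 fun n => ?_
    rw [IWord_eq_Icc H ⟨x₀, hne n⟩]
    exact ⟨le_ciSup hBdd n, le_trans hLx hx1⟩
  apply le_antisymm
  · exact csInf_le ⟨0, fun t ht => (ht 0).1.1⟩ hLmem
  · refine le_csInf ⟨L, hLmem⟩ fun t ht => ?_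
    exact ciSup_le fun n => aWord_le H (((forwardAdmissible_iff H).1 ht) n)

lemma aWord_prefix_mono (H : H1 f0 f1 df0 df1 d) (hx : forwardAdmissible f0 f1 d ξ x₀) :
    Monotone (fun n => aWord f0 f1 d (seqWord ξ 0 n)) := by
  apply monotone_nat_of_le_succ
  intro n
  have hne : ∀ n, x₀ ∈ IWord f0 f1 d (seqWord ξ 0 n) := (forwardAdmissible_iff H).1 hx
  exact csInf_le_csInf (IWord_bddBelow _) ⟨x₀, hne (n+1)⟩ (IWord_prefix_anti H ξ n)

lemma tendsto_xPlus (H : H1 f0 f1 df0 df1 d) (hx : forwardAdmissible f0 f1 d ξ x₀) :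
    Tendsto (fun n => aWord f0 f1 d (seqWord ξ 0 n)) atTop (nhds (xPlus f0 f1 d ξ)) := by
  rw [xPlus_eq H hx]
  exact tendsto_atTop_ciSup (aWord_prefix_mono H hx)
    ⟨x₀, by rintro t ⟨n, rfl⟩; exact aWord_le H (((forwardAdmissible_iff H).1 hx) n)⟩

end xplus

end Lemmas3
section Lemmas4

variable {f0 f1 df0 df1 : ℝ → ℝ} {d : ℝ} {ξ : Seq2} {x₀ : ℝ}

lemma seqWord_base_congr (ξ : Seq2) {a b : ℤ} (n : ℕ) (h : a = b) :
    seqWord ξ a n = seqWord ξ b n := by rw [h]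

/-- the two-sided word through a Γ-point, admissible at 1. -/
lemma big_wordAdm (H : H1 f0 f1 df0 df1 d) (hΓ : (ξ, x₀) ∈ Gamma f0 f1 d)
    {y : ℕ → ℝ} (hy0 : y 0 = x₀) (hy : BChain f0 f1 d ξ y) (a b : ℕ) :
    wordAdm f0 f1 d (seqWord ξ (-(a:ℤ)) (a + b)) (y a) ∧
      fWord f0 f1 (seqWord ξ (-(a:ℤ)) (a + b)) (y a) = fIter f0 f1 ξ b x₀ := by
  have hsplit : seqWord ξ (-(a:ℤ)) (a + b) =
      seqWord ξ (-(a:ℤ)) a ++ seqWord ξ 0 b := by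
    have h := seqWord_add ξ (-(a:ℤ)) a b
    rwa [seqWord_base_congr ξ b (show -(a:ℤ) + (a:ℕ) = 0 by push_cast; ring)] at h
  have h1 := bchain_wordAdm H hy 0 a
  rw [Nat.zero_add] at h1
  have hbase : -((0:ℕ):ℤ) - (a:ℕ) = -(a:ℤ) := by push_cast; ring
  rw [seqWord_base_congr ξ a hbase] at h1
  have h1w : wordAdm f0 f1 d (seqWord ξ (-(a:ℤ)) a) (y a) := h1.1
  have h1v : fWord f0 f1 (seqWord ξ (-(a:ℤ)) a) (y a) = x₀ := by rw [h1.2, hy0]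
  have h2 : wordAdm f0 f1 d (seqWord ξ 0 b) x₀ := (forwardAdmissible_iff H).1 hΓ.1 b
  constructor
  · rw [hsplit, wordAdm_append]
    exact ⟨h1w, by rw [h1v]; exact h2⟩
  · rw [hsplit, fWord_append, h1v, fIter_eq_fWord]

lemma zero_forever (H : H1 f0 f1 df0 df1 d) (hfa : forwardAdmissible f0 f1 d ξ x₀)
    (k : ℕ) (h0 : fIter f0 f1 ξ k x₀ = 0) :
    ∀ j : ℕ, fIter f0 f1 ξ (k + j) x₀ = 0 ∧ ξ ((k:ℤ) + j) = 0 := by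
  have key : ∀ m : ℕ, fIter f0 f1 ξ m x₀ = 0 → ξ (m:ℤ) = 0 := by
    intro m hm
    rcases fin2_cases (ξ (m:ℤ)) with h | h
    · exact h
    · have := (hfa m).2 h
      rw [hm] at this
      exact absurd this (not_le.2 (d_pos H))
  intro j
  induction j with
  | zero => exact ⟨by simpa using h0, by simpa using key k (by simpa using h0)⟩
  | succ j ih =>
    have hval : fIter f0 f1 ξ (k + j + 1) x₀ = 0 := by
      rw [fIter_succ, ih.1]
      have : ξ ((k + j : ℕ) : ℤ) = 0 := by push_cast; exact ih.2
      rw [this]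
      unfold fi
      rw [if_pos rfl, f0_zero H]
    refine ⟨by rw [show k + (j+1) = k + j + 1 by omega]; exact hval, ?_⟩
    have := key (k + j + 1) hval
    push_cast at this ⊢
    convert this using 2 <;> omega
  
lemma head_zero (H : H1 f0 f1 df0 df1 d) {j N : ℕ} (hjN : N < j)
    (hadm : wordAdm f0 f1 d (seqWord ξ (-(j:ℤ)) (j - N)) 1)
    (hval : fWord f0 f1 (seqWord ξ (-(j:ℤ)) (j - N)) 1 = 1) : ξ (-(j:ℤ)) = 0 := by
  rcases fin2_cases (ξ (-(j:ℤ))) with h | h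
  · exact h
  exfalso
  have hsw : seqWord ξ (-(j:ℤ)) (j - N) =
      ξ (-(j:ℤ)) :: seqWord ξ (-(j:ℤ) + 1) (j - N - 1) := by
    have hh := seqWord_succ_left ξ (-(j:ℤ)) (j - N - 1)
    rwa [show (j - N - 1) + 1 = j - N by omega] at hh
  rw [hsw] at hadm hval
  rw [wordAdm_cons] at hadm
  have hadm' := hadm.2.2
  rw [h, fi_one] at hadm'
  have hadm1 : wordAdm f0 f1 d (seqWord ξ (-(j:ℤ) + 1) (j - N - 1)) 1 :=
    wordAdm_mono H hadm' (f1_lt_one H le_rfl).le le_rfl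
  have hlt : fWord f0 f1 (seqWord ξ (-(j:ℤ) + 1) (j - N - 1)) (f1 1) <
      fWord f0 f1 (seqWord ξ (-(j:ℤ) + 1) (j - N - 1)) 1 :=
    fWord_mono H _ (f1_lt_one H le_rfl)
  have hle1 : fWord f0 f1 (seqWord ξ (-(j:ℤ) + 1) (j - N - 1)) 1 ≤ 1 :=
    (wordAdm_val_mem hadm1).2
  rw [fWord_cons, h, fi_one] at hval
  linarith

/-- Fact P : for `ξ ∈ Σ^cod` the value of the `[-N,N]`-window word at 1 is positive. -/
lemma factP (H : H1 f0 f1 df0 df1 d) (hΓ : (ξ, x₀) ∈ Gamma f0 f1 d)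
    (hcod : ξ ∈ SigmaCod f0 f1 d) (N : ℕ) :
    0 < fWord f0 f1 (seqWord ξ (-(N:ℤ)) (N + (N + 1))) 1 := by
  obtain ⟨y, hy0, hy⟩ := hΓ.2
  have hadmB := (big_wordAdm H hΓ hy0 hy N (N + 1)).1
  have hadm1 : wordAdm f0 f1 d (seqWord ξ (-(N:ℤ)) (N + (N + 1))) 1 :=
    wordAdm_mono H hadmB (hy N).1.2 le_rfl
  rcases lt_or_ge 0 (fWord f0 f1 (seqWord ξ (-(N:ℤ)) (N + (N + 1))) 1) with h | h
  · exact h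
  exfalso
  have hv : fWord f0 f1 (seqWord ξ (-(N:ℤ)) (N + (N + 1))) 1 = 0 :=
    le_antisymm h (wordAdm_val_mem hadm1).1
  -- left zeros
  have hleft : ∀ m : ℤ, m < -(N:ℤ) → ξ m = 0 := by
    intro m hm
    obtain ⟨j, hmj⟩ : ∃ j : ℕ, m = -(j:ℤ) := ⟨(-m).toNat, by omega⟩
    have hjN : N < j := by omega
    rw [hmj]
    -- decompose the long word
    have hsplit : seqWord ξ (-(j:ℤ)) (j + (N + 1)) =
        seqWord ξ (-(j:ℤ)) (j - N) ++ seqWord ξ (-(N:ℤ)) (N + (N + 1)) := by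
      have hx := seqWord_add ξ (-(j:ℤ)) (j - N) (N + (N + 1))
      rw [show (j - N) + (N + (N + 1)) = j + (N + 1) by omega] at hx
      rwa [seqWord_base_congr ξ (N + (N + 1))
        (show -(j:ℤ) + ((j - N : ℕ):ℤ) = -(N:ℤ) by omega)] at hx
    have hadmJ : wordAdm f0 f1 d (seqWord ξ (-(j:ℤ)) (j + (N + 1))) 1 :=
      wordAdm_mono H (big_wordAdm H hΓ hy0 hy j (N + 1)).1 (hy j).1.2 le_rfl
    rw [hsplit, wordAdm_append] at hadmJ
    set s := fWord f0 f1 (seqWord ξ (-(j:ℤ)) (j - N)) 1 with hs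
    have hs1 : s ≤ 1 := (wordAdm_val_mem hadmJ.1).2
    have h0le : 0 ≤ fWord f0 f1 (seqWord ξ (-(N:ℤ)) (N + (N + 1))) s :=
      (wordAdm_val_mem hadmJ.2).1
    have hle : fWord f0 f1 (seqWord ξ (-(N:ℤ)) (N + (N + 1))) s ≤ 0 := by
      rw [← hv]
      exact (fWord_mono H _).monotone hs1
    have hseq : fWord f0 f1 (seqWord ξ (-(N:ℤ)) (N + (N + 1))) s
        = fWord f0 f1 (seqWord ξ (-(N:ℤ)) (N + (N + 1))) 1 := by
      rw [hv]; linarith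
    have hsone : s = 1 := (fWord_mono H _).injective hseq
    exact head_zero H hjN hadmJ.1 hsone
  -- right zeros
  have hc : fIter f0 f1 ξ (N + 1) x₀ = 0 := by
    have hb := big_wordAdm H hΓ hy0 hy N (N + 1)
    have h0le : 0 ≤ fIter f0 f1 ξ (N + 1) x₀ := (hΓ.1 (N + 1)).1.1
    have hle : fIter f0 f1 ξ (N + 1) x₀ ≤ 0 := by
      rw [← hb.2, ← hv]
      exact (fWord_mono H _).monotone (hy N).1.2
    linarith
  have hright := zero_forever H hΓ.1 (N + 1) hc
  -- assemble SigmaHet membership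
  apply hcod.2
  refine ⟨hcod.1, -(N:ℤ), seqWord ξ (-(N:ℤ)) (N + (N + 1)), hleft, ?_, ?_, hv⟩
  · intro i hi
    rw [seqWord_length] at hi
    rw [seqWord_getD ξ _ _ i hi]
  · intro m hm
    rw [seqWord_length] at hm
    obtain ⟨j, hmj⟩ : ∃ j : ℕ, m = ((N + 1 : ℕ) : ℤ) + j :=
      ⟨(m - (N + 1)).toNat, by push_cast at hm ⊢; omega⟩
    rw [hmj]
    exact (hright j).2

/-- Fact Q : for `ξ ∈ Σ^cod` and any window, `a_{[prefix]}` is strictly below some `tprime`. -/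
lemma factQ (H : H1 f0 f1 df0 df1 d) (hΓ : (ξ, x₀) ∈ Gamma f0 f1 d)
    (hcod : ξ ∈ SigmaCod f0 f1 d) (N n : ℕ) :
    ∃ M : ℕ, N ≤ M ∧ aWord f0 f1 d (seqWord ξ 0 n) < tprime f0 f1 ξ 0 M := by
  by_contra hcon
  push_neg at hcon
  obtain ⟨y, hy0, hy⟩ := hΓ.2
  have hx0mem : x₀ ∈ IWord f0 f1 d (seqWord ξ 0 n) := (forwardAdmissible_iff H).1 hΓ.1 n
  have han : aWord f0 f1 d (seqWord ξ 0 n) ≤ x₀ := aWord_le H hx0mem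
  have hxt : ∀ M, x₀ ≤ tprime f0 f1 ξ 0 M := fun M =>
    mem_Iminus_le_tprime H ⟨y, hy0, hy⟩ M
  have heq : ∀ M, N ≤ M → tprime f0 f1 ξ 0 M = aWord f0 f1 d (seqWord ξ 0 n) := fun M hM =>
    le_antisymm (hcon M hM) (le_trans han (hxt M))
  have hx0a : x₀ = aWord f0 f1 d (seqWord ξ 0 n) :=
    le_antisymm (le_trans (hxt N) (hcon N le_rfl)) han
  -- base change for tprime words
  have htw : ∀ M : ℕ, tprime f0 f1 ξ 0 M = fWord f0 f1 (seqWord ξ (-(M:ℤ)) M) 1 := by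
    intro M
    unfold tprime
    congr 1
    apply seqWord_base_congr
    push_cast; ring
  have hadm1 : ∀ M : ℕ, wordAdm f0 f1 d (seqWord ξ (-(M:ℤ)) M) 1 := by
    intro M
    have := wordAdm_one H hy 0 M
    rwa [seqWord_base_congr ξ M (show -((0:ℕ):ℤ) - (M:ℕ) = -(M:ℤ) by push_cast; ring)] at this
  -- left zeros
  have hleft : ∀ m : ℤ, m < -(N:ℤ) → ξ m = 0 := by
    intro m hm
    obtain ⟨j, hmj⟩ : ∃ j : ℕ, m = -(j:ℤ) := ⟨(-m).toNat, by omega⟩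
    have hjN : N < j := by omega
    rw [hmj]
    have hsplit : seqWord ξ (-(j:ℤ)) j =
        seqWord ξ (-(j:ℤ)) (j - N) ++ seqWord ξ (-(N:ℤ)) N := by
      have hx := seqWord_add ξ (-(j:ℤ)) (j - N) N
      rw [show (j - N) + N = j by omega] at hx
      rwa [seqWord_base_congr ξ N
        (show -(j:ℤ) + ((j - N : ℕ):ℤ) = -(N:ℤ) by omega)] at hx
    have hadmJ := hadm1 j
    rw [hsplit, wordAdm_append] at hadmJ
    set s := fWord f0 f1 (seqWord ξ (-(j:ℤ)) (j - N)) 1 with hs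
    have hs1 : s ≤ 1 := (wordAdm_val_mem hadmJ.1).2
    have hveq : fWord f0 f1 (seqWord ξ (-(N:ℤ)) N) s
        = fWord f0 f1 (seqWord ξ (-(N:ℤ)) N) 1 := by
      have e1 : fWord f0 f1 (seqWord ξ (-(N:ℤ)) N) s = tprime f0 f1 ξ 0 j := by
        rw [htw j, hsplit, fWord_append]
      have e2 : fWord f0 f1 (seqWord ξ (-(N:ℤ)) N) 1 = tprime f0 f1 ξ 0 N := (htw N).symm
      rw [e1, e2, heq j (by omega), heq N le_rfl]
    have hsone : s = 1 := (fWord_mono H _).injective hveq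
    exact head_zero H hjN hadmJ.1 hsone
  -- right zeros
  have hc : fIter f0 f1 ξ n x₀ = 0 := by
    rw [fIter_eq_fWord, hx0a]
    exact fWord_aWord H ⟨x₀, hx0mem⟩
  have hright := zero_forever H hΓ.1 n hc
  apply hcod.2
  refine ⟨hcod.1, -(N:ℤ), seqWord ξ (-(N:ℤ)) (N + n), hleft, ?_, ?_, ?_⟩
  · intro i hi
    rw [seqWord_length] at hi
    rw [seqWord_getD ξ _ _ i hi]
  · intro m hm
    rw [seqWord_length] at hm
    obtain ⟨j, hmj⟩ : ∃ j : ℕ, m = ((n : ℕ) : ℤ) + j :=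
      ⟨(m - n).toNat, by push_cast at hm ⊢; omega⟩
    rw [hmj]
    exact (hright j).2
  · have hsplit : seqWord ξ (-(N:ℤ)) (N + n) =
        seqWord ξ (-(N:ℤ)) N ++ seqWord ξ 0 n := by
      have hx := seqWord_add ξ (-(N:ℤ)) N n
      rwa [seqWord_base_congr ξ n (show -(N:ℤ) + (N:ℕ) = 0 by push_cast; ring)] at hx
    rw [hsplit, fWord_append]
    have : fWord f0 f1 (seqWord ξ (-(N:ℤ)) N) 1 = aWord f0 f1 d (seqWord ξ 0 n) := by
      rw [← htw N]; exact heq N le_rfl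
    rw [this]
    exact fWord_aWord H ⟨x₀, hx0mem⟩

end Lemmas4
section Lemmas5

variable {f0 f1 df0 df1 : ℝ → ℝ} {d : ℝ}

/-- A full orbit datum for the skew product. -/
def FullOrb (f0 f1 : ℝ → ℝ) (d : ℝ) (η : Seq2) (u : ℤ → ℝ) : Prop :=
  ∀ t : ℤ, u t ∈ Icc (0:ℝ) 1 ∧ (η t = 1 → d ≤ u t) ∧
    (if η t = 0 then f0 (u t) else f1 (u t)) = u (t + 1)

lemma pair_eq {α β : Type*} {a c : α} {b d : β} (h1 : a = c) (h2 : b = d) : (a, b) = (c, d) := by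
  rw [h1, h2]

lemma F_iterate {η : Seq2} {u : ℤ → ℝ} (h : FullOrb f0 f1 d η u) :
    ∀ (k : ℕ) (t : ℤ), (F f0 f1)^[k] ((fun n => η (n + t)), u t) =
      ((fun n => η (n + (t + k))), u (t + k)) := by
  intro k
  induction k with
  | zero => intro t; simp
  | succ k ih =>
    intro t
    rw [Function.iterate_succ_apply]
    have hF : F f0 f1 ((fun n => η (n + t)), u t) = ((fun n => η (n + (t + 1))), u (t + 1)) := by
      unfold F shift
      apply pair_eq
      · funext n; show η (n + 1 + t) = η (n + (t + 1)); congr 1; ring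
      · show (if η (0 + t) = 0 then f0 (u t) else f1 (u t)) = u (t + 1)
        rw [zero_add]
        exact (h t).2.2
    rw [hF, ih (t + 1)]
    apply pair_eq
    · funext n; congr 2; push_cast; ring
    · congr 1; push_cast; ring

lemma fullOrb_fIter {η : Seq2} {u : ℤ → ℝ} (h : FullOrb f0 f1 d η u) (t : ℤ) :
    ∀ n : ℕ, fIter f0 f1 (fun n' => η (n' + t)) n (u t) = u (t + n) := by
  intro n
  induction n with
  | zero => show u t = u (t + 0); rw [add_zero]
  | succ n ih =>
    have key := (h (t + (n:ℤ))).2.2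
    have hgoal : fIter f0 f1 (fun n' => η (n' + t)) (n+1) (u t)
        = (if η ((n:ℤ) + t) = 0 then f0 else f1) (fIter f0 f1 (fun n' => η (n' + t)) n (u t)) :=
      rfl
    rw [hgoal, ih, ite_apply]
    rw [show (n:ℤ) + t = t + n by ring]
    rw [key]
    congr 1
    push_cast; ring

lemma fullOrb_gamma {η : Seq2} {u : ℤ → ℝ} (h : FullOrb f0 f1 d η u) (t : ℤ) :
    ((fun n => η (n + t)), u t) ∈ Gamma f0 f1 d := by
  constructor
  · intro n
    show fIter f0 f1 (fun n' => η (n' + t)) n (u t) ∈ Icc (0:ℝ) 1 ∧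
      (η ((n:ℤ) + t) = 1 → d ≤ fIter f0 f1 (fun n' => η (n' + t)) n (u t))
    rw [fullOrb_fIter h t n]
    refine ⟨(h (t + n)).1, fun h1 => (h (t + n)).2.1 ?_⟩
    rwa [show t + (n:ℤ) = (n:ℤ) + t by ring]
  · refine ⟨fun m => u (t - m), by norm_num, fun m => ?_⟩
    refine ⟨(h (t - m)).1, ?_, ?_⟩
    · intro h0
      have h0' : η (t - m - 1) = 0 := by
        have : η ((-(m:ℤ) - 1) + t) = 0 := h0
        rwa [show (-(m:ℤ) - 1) + t = t - m - 1 by ring] at this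
      have hstep := (h (t - m - 1)).2.2
      rw [h0', if_pos rfl, show t - (m:ℤ) - 1 + 1 = t - m by ring] at hstep
      show f0 (u (t - ((m:ℕ)+1 : ℕ))) = u (t - m)
      rw [show t - (((m:ℕ)+1 : ℕ) : ℤ) = t - m - 1 by push_cast; ring]
      exact hstep
    · intro h1
      have h1' : η (t - m - 1) = 1 := by
        have : η ((-(m:ℤ) - 1) + t) = 1 := h1
        rwa [show (-(m:ℤ) - 1) + t = t - m - 1 by ring] at this
      have hstep := (h (t - m - 1)).2.2
      rw [h1', if_neg (by decide), show t - (m:ℤ) - 1 + 1 = t - m by ring] at hstep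
      have hd := (h (t - m - 1)).2.1 h1'
      constructor
      · show d ≤ u (t - ((m:ℕ)+1 : ℕ))
        rwa [show t - (((m:ℕ)+1 : ℕ) : ℤ) = t - m - 1 by push_cast; ring]
      · show f1 (u (t - ((m:ℕ)+1 : ℕ))) = u (t - m)
        rw [show t - (((m:ℕ)+1 : ℕ) : ℤ) = t - m - 1 by push_cast; ring]
        exact hstep

lemma tendsto_seq_zero {ζ : ℕ → Seq2} (h : ∀ n : ℤ, ∀ᶠ k : ℕ in atTop, ζ k n = 0) :
    Tendsto ζ atTop (nhds zeroSeq) := by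
  rw [tendsto_pi_nhds]
  intro n
  exact Tendsto.congr' (by filter_upwards [h n] with k hk using hk.symm) tendsto_const_nhds

lemma mem_Ws_of_fullOrb {η : Seq2} {u : ℤ → ℝ} {c : ℝ} (h : FullOrb f0 f1 d η u)
    (hright : ∃ B : ℕ, ∀ m : ℤ, (B:ℤ) ≤ m → η m = 0)
    (hu : Tendsto (fun k : ℕ => u k) atTop (nhds c)) :
    (η, u 0) ∈ Ws f0 f1 d (zeroSeq, c) := by
  have hid : ((fun n => η (n + (0:ℤ))), u 0) = (η, u 0) := by
    simp only [add_zero]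
  constructor
  · intro k
    rw [← hid, F_iterate h k 0]
    have := fullOrb_gamma h ((0:ℤ) + k)
    convert this using 2
  · have : ∀ k : ℕ, (F f0 f1)^[k] (η, u 0) = ((fun n => η (n + ((0:ℤ) + k))), u ((0:ℤ) + k)) := by
      intro k; rw [← hid, F_iterate h k 0]
    refine Tendsto.congr (fun k => (this k).symm) ?_
    apply Tendsto.prodMk_nhds
    · obtain ⟨B, hB⟩ := hright
      apply tendsto_seq_zero
      intro n
      rw [eventually_atTop]
      refine ⟨(B + n.natAbs), fun k hk => hB _ ?_⟩
      push_cast at hk ⊢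
      omega
    · refine hu.congr fun k => ?_
      congr 1
      omega
  
lemma mem_Wu_of_fullOrb {η : Seq2} {u : ℤ → ℝ} {c : ℝ} (h : FullOrb f0 f1 d η u)
    (hleft : ∃ B : ℕ, ∀ m : ℤ, m ≤ -(B:ℤ) → η m = 0)
    (hu : Tendsto (fun m : ℕ => u (-m)) atTop (nhds c)) :
    (η, u 0) ∈ Wu f0 f1 d (zeroSeq, c) := by
  refine ⟨fun m => ((fun n => η (n + (-(m:ℤ)))), u (-(m:ℤ))), ?_, ?_, ?_⟩
  · simp only [Nat.cast_zero, neg_zero, add_zero]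
  · intro m
    refine ⟨fullOrb_gamma h _, ?_⟩
    have hF : F f0 f1 ((fun n => η (n + (-((m:ℤ)+1)))), u (-((m:ℤ)+1))) =
        ((fun n => η (n + (-(m:ℤ)))), u (-(m:ℤ))) := by
      unfold F shift
      apply pair_eq
      · funext n; show η (n + 1 + -((m:ℤ)+1)) = η (n + -(m:ℤ)); congr 1; ring
      · have hstep := (h (-(m:ℤ) - 1)).2.2
        rw [show -(m:ℤ) - 1 + 1 = -(m:ℤ) by ring] at hstep
        show (if η (0 + -((m:ℤ)+1)) = 0 then f0 (u (-((m:ℤ)+1))) else f1 (u (-((m:ℤ)+1)))) =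
          u (-(m:ℤ))
        rw [show (0:ℤ) + -((m:ℤ)+1) = -(m:ℤ) - 1 by ring]
        rw [show -((m:ℤ)+1) = -(m:ℤ) - 1 by ring]
        exact hstep
    show F f0 f1 ((fun n => η (n + -(((m:ℕ)+1 : ℕ):ℤ))), u (-(((m:ℕ)+1 : ℕ):ℤ))) =
      ((fun n => η (n + -(m:ℤ))), u (-(m:ℤ)))
    rw [show -(((m:ℕ)+1 : ℕ):ℤ) = -((m:ℤ)+1) by push_cast; ring]
    exact hF
  · apply Tendsto.prodMk_nhds
    · apply tendsto_seq_zero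
      intro n
      obtain ⟨B, hB⟩ := hleft
      rw [eventually_atTop]
      refine ⟨(B + n.natAbs), fun k hk => hB _ ?_⟩
      push_cast at hk ⊢
      omega
    · exact hu

lemma F_fix_P (H : H1 f0 f1 df0 df1 d) : F f0 f1 Pfix = Pfix := by
  unfold F Pfix shift zeroSeq
  simp [f0_one H]

lemma F_fix_Q (H : H1 f0 f1 df0 df1 d) : F f0 f1 Qfix = Qfix := by
  unfold F Qfix shift zeroSeq
  simp [f0_zero H]

lemma mem_WsOrbit {R X : Seq2 × ℝ} (h : X ∈ Ws f0 f1 d R) : X ∈ WsOrbit f0 f1 d R := by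
  apply mem_iUnion.2 ⟨0, _⟩
  simpa using h

lemma mem_WuOrbit {R X : Seq2 × ℝ} (h : X ∈ Wu f0 f1 d R) : X ∈ WuOrbit f0 f1 d R := by
  apply mem_iUnion.2 ⟨0, _⟩
  simpa using h

/-! ### convergence of `f0`-iterates -/

lemma f0_iter_mem (H : H1 f0 f1 df0 df1 d) {v : ℝ} (h0 : 0 < v) (h1 : v ≤ 1) (k : ℕ) :
    f0^[k] v ∈ Ioc (0:ℝ) 1 := by
  induction k with
  | zero => exact ⟨h0, h1⟩
  | succ k ih =>
    rw [Function.iterate_succ_apply']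
    exact ⟨f0_pos H ih.1, f0_le_one H ih.2⟩

lemma tendsto_f0_iter (H : H1 f0 f1 df0 df1 d) {v : ℝ} (h0 : 0 < v) (h1 : v ≤ 1) :
    Tendsto (fun k => f0^[k] v) atTop (nhds 1) := by
  have hmono : Monotone (fun k => f0^[k] v) := by
    apply monotone_nat_of_le_succ
    intro k
    rw [Function.iterate_succ_apply']
    exact f0_self_le H ⟨(f0_iter_mem H h0 h1 k).1.le, (f0_iter_mem H h0 h1 k).2⟩
  have hbdd : BddAbove (range fun k => f0^[k] v) :=
    ⟨1, by rintro t ⟨k, rfl⟩; exact (f0_iter_mem H h0 h1 k).2⟩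
  have hlim := tendsto_atTop_ciSup hmono hbdd
  set L := ⨆ k, f0^[k] v with hL
  have hL1 : L ≤ 1 := ciSup_le fun k => (f0_iter_mem H h0 h1 k).2
  have hLv : v ≤ L := le_ciSup hbdd 0
  have hfix : f0 L = L := by
    have h1' : Tendsto (fun k => f0 (f0^[k] v)) atTop (nhds (f0 L)) :=
      ((cont0 H).continuousAt).tendsto.comp hlim
    have h2' : Tendsto (fun k => f0^[k+1] v) atTop (nhds L) :=
      (tendsto_add_atTop_iff_nat 1).2 hlim
    exact tendsto_nhds_unique (h1'.congr fun k => (Function.iterate_succ_apply' f0 k v).symm) h2'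
  rcases eq_or_lt_of_le hL1 with h | h
  · rwa [h] at hlim
  · exfalso
    have hL0 : 0 < L := lt_of_lt_of_le h0 hLv
    have := H.f0_above L ⟨hL0, h⟩
    rw [hfix] at this
    exact lt_irrefl _ this

open Classical in
/-- a choice of `f0`-preimage inside `[0,1]`. -/
noncomputable def ginv (f0 f1 : ℝ → ℝ) (t : ℝ) : ℝ :=
  if h : ∃ s ∈ Icc (0:ℝ) 1, f0 s = t then h.choose else 0

lemma ginv_spec (H : H1 f0 f1 df0 df1 d) {t : ℝ} (ht : t ∈ Icc (0:ℝ) 1) :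
    ginv f0 f1 t ∈ Icc (0:ℝ) 1 ∧ f0 (ginv f0 f1 t) = t := by
  classical
  have hex : ∃ s ∈ Icc (0:ℝ) 1, f0 s = t := H.surj0 ht
  unfold ginv
  rw [dif_pos hex]
  exact ⟨hex.choose_spec.1, hex.choose_spec.2⟩

lemma ginv_iter_mem (H : H1 f0 f1 df0 df1 d) {v : ℝ} (hv : v ∈ Icc (0:ℝ) 1) (k : ℕ) :
    (ginv f0 f1)^[k] v ∈ Icc (0:ℝ) 1 := by
  induction k with
  | zero => exact hv
  | succ k ih =>
    rw [Function.iterate_succ_apply']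
    exact (ginv_spec H ih).1

lemma ginv_iter_step (H : H1 f0 f1 df0 df1 d) {v : ℝ} (hv : v ∈ Icc (0:ℝ) 1) (k : ℕ) :
    f0 ((ginv f0 f1)^[k+1] v) = (ginv f0 f1)^[k] v := by
  rw [Function.iterate_succ_apply']
  exact (ginv_spec H (ginv_iter_mem H hv k)).2

lemma ginv_le (H : H1 f0 f1 df0 df1 d) {t : ℝ} (ht : t ∈ Icc (0:ℝ) 1) :
    ginv f0 f1 t ≤ t := by
  have hs := ginv_spec H ht
  have := f0_self_le H hs.1
  rw [hs.2] at this
  exact this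

lemma ginv_lt_one (H : H1 f0 f1 df0 df1 d) {t : ℝ} (ht : t ∈ Icc (0:ℝ) 1) (ht1 : t < 1) :
    ginv f0 f1 t < 1 := by
  rcases lt_or_ge (ginv f0 f1 t) 1 with h | h
  · exact h
  · exfalso
    have hs := ginv_spec H ht
    have h1 : ginv f0 f1 t = 1 := le_antisymm hs.1.2 h
    rw [h1, f0_one H] at hs
    exact absurd hs.2 (by linarith)

lemma tendsto_ginv_iter (H : H1 f0 f1 df0 df1 d) {v : ℝ} (hv : v ∈ Icc (0:ℝ) 1)
    (hv1 : v < 1) : Tendsto (fun k => (ginv f0 f1)^[k] v) atTop (nhds 0) := by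
  have hanti : Antitone (fun k => (ginv f0 f1)^[k] v) := by
    apply antitone_nat_of_succ_le
    intro k
    rw [Function.iterate_succ_apply']
    exact ginv_le H (ginv_iter_mem H hv k)
  have hbdd : BddBelow (range fun k => (ginv f0 f1)^[k] v) :=
    ⟨0, by rintro t ⟨k, rfl⟩; exact (ginv_iter_mem H hv k).1⟩
  have hlim := tendsto_atTop_ciInf hanti hbdd
  set L := ⨅ k, (ginv f0 f1)^[k] v with hL
  have hL0 : 0 ≤ L := le_ciInf fun k => (ginv_iter_mem H hv k).1
  have hL1 : L < 1 := lt_of_le_of_lt (ciInf_le hbdd 0) hv1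
  have hfix : f0 L = L := by
    have h1' : Tendsto (fun k => f0 ((ginv f0 f1)^[k+1] v)) atTop (nhds (f0 L)) :=
      ((cont0 H).continuousAt).tendsto.comp ((tendsto_add_atTop_iff_nat 1).2 hlim)
    have h2' : Tendsto (fun k => (ginv f0 f1)^[k] v) atTop (nhds L) := hlim
    refine tendsto_nhds_unique ?_ h2'
    exact h1'.congr fun k => ginv_iter_step H hv k
  rcases eq_or_lt_of_le hL0 with h | h
  · rwa [← h] at hlim
  · exfalso
    have := H.f0_above L ⟨h, hL1⟩
    rw [hfix] at this
    exact lt_irrefl _ this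

/-- dependent recursion for chains. -/
lemma chain_rec {P : ℕ → ℝ → Prop} {Q : ℕ → ℝ → ℝ → Prop} (z0 : ℝ) (h0 : P 0 z0)
    (hstep : ∀ m v, P m v → ∃ v', P (m+1) v' ∧ Q m v v') :
    ∃ c : ℕ → ℝ, c 0 = z0 ∧ (∀ m, P m (c m)) ∧ ∀ m, Q m (c m) (c (m+1)) := by
  classical
  refine ⟨fun m => Nat.rec z0
    (fun m v => if h : P m v then (hstep m v h).choose else 0) m, rfl, ?_⟩
  have hP : ∀ m, P m (Nat.rec z0
      (fun m v => if h : P m v then (hstep m v h).choose else 0) m : ℝ) := by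
    intro m
    induction m with
    | zero => exact h0
    | succ m ih =>
      show P (m+1) (if h : P m (Nat.rec z0
        (fun m v => if h : P m v then (hstep m v h).choose else 0) m : ℝ)
        then (hstep m _ h).choose else 0)
      rw [dif_pos ih]
      exact (hstep m _ ih).choose_spec.1
  refine ⟨hP, fun m => ?_⟩
  show Q m _ (if h : P m (Nat.rec z0
    (fun m v => if h : P m v then (hstep m v h).choose else 0) m : ℝ)
    then (hstep m _ h).choose else 0)
  rw [dif_pos (hP m)]
  exact (hstep m _ (hP m)).choose_spec.2

end Lemmas5
section Constructions

variable {f0 f1 df0 df1 : ℝ → ℝ} {d : ℝ}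

lemma constructionP (H : H1 f0 f1 df0 df1 d) {ξ : Seq2} {x₀ : ℝ}
    (hΓ : (ξ, x₀) ∈ Gamma f0 f1 d) (hcod : ξ ∈ SigmaCod f0 f1 d) (N : ℕ) :
    (((fun m : ℤ => if -(N:ℤ) ≤ m ∧ m ≤ (N:ℤ) then ξ m else 0) : Seq2),
      tprime f0 f1 ξ 0 N) ∈ Ws f0 f1 d Pfix ∩ Wu f0 f1 d Pfix := by
  obtain ⟨y, hy0, hy⟩ := hΓ.2
  set η : Seq2 := fun m : ℤ => if -(N:ℤ) ≤ m ∧ m ≤ (N:ℤ) then ξ m else 0 with hηdef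
  set u : ℤ → ℝ := fun t => fWord f0 f1 (seqWord η (-(N:ℤ)) (t + N).toNat) 1 with hudef
  have hη_in : ∀ m : ℤ, -(N:ℤ) ≤ m → m ≤ (N:ℤ) → η m = ξ m := by
    intro m h1 h2; simp only [hηdef]; rw [if_pos ⟨h1, h2⟩]
  have hη_out : ∀ m : ℤ, (m < -(N:ℤ) ∨ (N:ℤ) < m) → η m = 0 := by
    intro m h; simp only [hηdef]; rw [if_neg (by omega)]
  have hw : ∀ k : ℕ, k ≤ N + (N + 1) → seqWord η (-(N:ℤ)) k = seqWord ξ (-(N:ℤ)) k := by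
    intro k hk
    apply seqWord_congr
    intro m h1 h2
    exact hη_in m h1 (by omega)
  have hbig : wordAdm f0 f1 d (seqWord ξ (-(N:ℤ)) (N + (N + 1))) 1 :=
    wordAdm_mono H (big_wordAdm H hΓ hy0 hy N (N + 1)).1 (hy N).1.2 le_rfl
  have hu_le : ∀ t : ℤ, t ≤ -(N:ℤ) → u t = 1 := by
    intro t ht
    simp only [hudef]
    rw [show (t + N).toNat = 0 by omega, seqWord_zero, fWord_nil]
  have hrec : ∀ t : ℤ, -(N:ℤ) ≤ t →
      u (t + 1) = (if η t = 0 then f0 else f1) (u t) := by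
    intro t ht
    simp only [hudef]
    rw [show (t + 1 + N).toNat = (t + N).toNat + 1 by omega, seqWord_succ_right,
      fWord_append, fWord_singleton,
      show -(N:ℤ) + ((t + N).toNat : ℤ) = t by omega]
    rfl
  set v := u ((N:ℤ) + 1) with hvdef
  have hvN : v = fWord f0 f1 (seqWord ξ (-(N:ℤ)) (N + (N + 1))) 1 := by
    simp only [hvdef, hudef]
    rw [show ((N:ℤ) + 1 + N).toNat = N + (N + 1) by omega, hw _ le_rfl]
  have hv0 : 0 < v := by rw [hvN]; exact factP H hΓ hcod N
  have hv1 : v ≤ 1 := by rw [hvN]; exact (wordAdm_val_mem hbig).2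
  have hiter : ∀ j : ℕ, u ((N:ℤ) + 1 + j) = f0^[j] v := by
    intro j
    induction j with
    | zero => simp [hvdef]
    | succ j ih =>
      have h1 := hrec ((N:ℤ) + 1 + j) (by omega)
      rw [if_pos (hη_out _ (Or.inr (by omega)))] at h1
      rw [ih] at h1
      rw [show (N:ℤ) + 1 + ((j+1:ℕ):ℤ) = (N:ℤ) + 1 + j + 1 by push_cast; ring, h1,
        Function.iterate_succ_apply']
  have hFO : FullOrb f0 f1 d η u := by
    intro t
    rcases lt_or_ge t (-(N:ℤ)) with ht | ht
    · have hη0 : η t = 0 := hη_out t (Or.inl ht)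
      refine ⟨by rw [hu_le t ht.le]; norm_num, ?_, ?_⟩
      · intro h1; rw [hη0] at h1; exact absurd h1 (by decide)
      · rw [if_pos hη0, hu_le t ht.le, f0_one H, hu_le (t+1) (by omega)]
    · refine ⟨?_, ?_, by rw [← ite_apply]; exact (hrec t ht).symm⟩
      · rcases le_or_gt t (N:ℤ) with ht2 | ht2
        · -- middle zone
          have hsplit := seqWord_add ξ (-(N:ℤ)) (t + N).toNat (N + (N+1) - (t + N).toNat)
          rw [show (t + N).toNat + (N + (N+1) - (t + N).toNat) = N + (N+1) by omega] at hsplit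
          rw [show -(N:ℤ) + ((t + N).toNat : ℤ) = t by omega] at hsplit
          have hb2 := hbig
          rw [hsplit, wordAdm_append] at hb2
          have hut : u t = fWord f0 f1 (seqWord ξ (-(N:ℤ)) (t + N).toNat) 1 := by
            simp only [hudef]
            rw [hw (t + N).toNat (by omega)]
          rw [hut]
          exact wordAdm_mem hb2.2
        · rw [show t = (N:ℤ) + 1 + (((t - (N+1)).toNat : ℕ) : ℤ) by omega, hiter]
          have := f0_iter_mem H hv0 hv1 (t - (N+1)).toNat
          exact ⟨this.1.le, this.2⟩
      · intro h1
        rcases le_or_gt t (N:ℤ) with ht2 | ht2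
        · have hsplit := seqWord_add ξ (-(N:ℤ)) (t + N).toNat (N + (N+1) - (t + N).toNat)
          rw [show (t + N).toNat + (N + (N+1) - (t + N).toNat) = N + (N+1) by omega] at hsplit
          rw [show -(N:ℤ) + ((t + N).toNat : ℤ) = t by omega] at hsplit
          have hb2 := hbig
          rw [hsplit, wordAdm_append] at hb2
          have hadm2 := hb2.2
          rw [show N + (N+1) - (t + N).toNat = (N + (N+1) - (t + N).toNat - 1) + 1 by omega,
            seqWord_succ_left] at hadm2
          have hut : u t = fWord f0 f1 (seqWord ξ (-(N:ℤ)) (t + N).toNat) 1 := by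
            simp only [hudef]
            rw [hw (t + N).toNat (by omega)]
          rw [hut]
          refine hadm2.2.1 ?_
          rw [← hη_in t ht ht2]
          exact h1
        · rw [hη_out t (Or.inr ht2)] at h1
          exact absurd h1 (by decide)
  have hu0 : u 0 = tprime f0 f1 ξ 0 N := by
    simp only [hudef]
    rw [show ((0:ℤ) + N).toNat = N by omega, hw N (by omega)]
    exact congrArg (fun w => fWord f0 f1 w 1)
      (seqWord_base_congr ξ N (by push_cast; ring))
  have hTend1 : Tendsto (fun k : ℕ => u (k:ℤ)) atTop (nhds 1) := by
    have e : ∀ j : ℕ, u (((j + (N+1) : ℕ) : ℤ)) = f0^[j] v := by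
      intro j
      rw [show ((j + (N+1) : ℕ) : ℤ) = (N:ℤ) + 1 + j by push_cast; ring]
      exact hiter j
    exact (tendsto_add_atTop_iff_nat (N+1)).1
      ((tendsto_f0_iter H hv0 hv1).congr fun j => (e j).symm)
  have hTend2 : Tendsto (fun m : ℕ => u (-(m:ℤ))) atTop (nhds 1) := by
    apply Tendsto.congr' _ tendsto_const_nhds
    filter_upwards [eventually_ge_atTop N] with m hm
    exact (hu_le (-(m:ℤ)) (by omega)).symm
  constructor
  · rw [← hu0]
    exact mem_Ws_of_fullOrb hFO ⟨N+1, fun m hm => hη_out m (Or.inr (by omega))⟩ hTend1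
  · rw [← hu0]
    exact mem_Wu_of_fullOrb hFO ⟨N+1, fun m hm => hη_out m (Or.inl (by omega))⟩ hTend2

lemma constructionQ (H : H1 f0 f1 df0 df1 d) {ξ : Seq2} {x₀ : ℝ}
    (hΓ : (ξ, x₀) ∈ Gamma f0 f1 d) (hcod : ξ ∈ SigmaCod f0 f1 d) (N : ℕ) :
    ∃ η : Seq2, (∀ m : ℤ, -(N:ℤ) ≤ m → m ≤ (N:ℤ) → η m = ξ m) ∧
      (η, aWord f0 f1 d (seqWord ξ 0 (N+1))) ∈ Ws f0 f1 d Qfix ∩ Wu f0 f1 d Qfix := by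
  obtain ⟨y, hy0, hy⟩ := hΓ.2
  obtain ⟨M, hMN, hMlt⟩ := factQ H hΓ hcod N (N+1)
  set z := aWord f0 f1 d (seqWord ξ 0 (N+1)) with hzdef
  have hx0mem : x₀ ∈ IWord f0 f1 d (seqWord ξ 0 (N+1)) := (forwardAdmissible_iff H).1 hΓ.1 (N+1)
  have hzadm : wordAdm f0 f1 d (seqWord ξ 0 (N+1)) z := aWord_mem H ⟨x₀, hx0mem⟩
  have hz0 : 0 ≤ z := (wordAdm_mem hzadm).1
  have hzx : z ≤ x₀ := aWord_le H hx0mem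
  have hzval : fWord f0 f1 (seqWord ξ 0 (N+1)) z = 0 := fWord_aWord H ⟨x₀, hx0mem⟩
  -- pullback chain
  have hstep : ∀ m v, v ∈ Icc (0:ℝ) (y m) → ∃ v', v' ∈ Icc (0:ℝ) (y (m+1)) ∧
      ((ξ (-(m:ℤ)-1) = 0 → f0 v' = v) ∧ (ξ (-(m:ℤ)-1) = 1 → d ≤ v' ∧ f1 v' = v)) := by
    intro m v hv
    rcases fin2_cases (ξ (-(m:ℤ)-1)) with h | h
    · have h0 := (hy m).2.1 h
      have hy1 : (0:ℝ) ≤ y (m+1) := (hy (m+1)).1.1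
      have hIVT : Icc (f0 0) (f0 (y (m+1))) ⊆ f0 '' Icc 0 (y (m+1)) :=
        intermediate_value_Icc hy1 (cont0 H).continuousOn
      have hvmem : v ∈ Icc (f0 0) (f0 (y (m+1))) := by
        constructor
        · rw [f0_zero H]; exact hv.1
        · rw [h0]; exact hv.2
      obtain ⟨c', hc', hfc⟩ := hIVT hvmem
      exact ⟨c', hc', fun _ => hfc, fun h1 => absurd (h.symm.trans h1) (by decide)⟩
    · obtain ⟨hd1, h1eq⟩ := (hy m).2.2 h
      have hIVT : Icc (f1 d) (f1 (y (m+1))) ⊆ f1 '' Icc d (y (m+1)) :=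
        intermediate_value_Icc hd1 (cont1 H).continuousOn
      have hvmem : v ∈ Icc (f1 d) (f1 (y (m+1))) := by
        constructor
        · rw [f1_d H]; exact hv.1
        · rw [h1eq]; exact hv.2
      obtain ⟨c', hc', hfc⟩ := hIVT hvmem
      exact ⟨c', ⟨le_trans (d_pos H).le hc'.1, hc'.2⟩,
        fun h0 => absurd (h.symm.trans h0) (by decide), fun _ => ⟨hc'.1, hfc⟩⟩
  obtain ⟨c, hc0, hcP, hcQ⟩ := chain_rec z ⟨hz0, by rw [hy0]; exact hzx⟩ hstep
  have hcB : BChain f0 f1 d ξ c := fun m =>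
    ⟨⟨(hcP m).1, le_trans (hcP m).2 (hy m).1.2⟩, (hcQ m).1, (hcQ m).2⟩
  have hcM1 : c M < 1 := by
    have htr := (bchain_wordAdm H hcB 0 M).2
    rw [Nat.zero_add, hc0] at htr
    by_contra hcon
    push_neg at hcon
    have hle : tprime f0 f1 ξ 0 M ≤ z := by
      rw [← htr]
      exact (fWord_mono H _).monotone hcon
    exact absurd hMlt (not_lt.2 hle)
  have hcMIcc : c M ∈ Icc (0:ℝ) 1 := (hcB M).1
  set η : Seq2 := fun m : ℤ => if -(M:ℤ) ≤ m ∧ m < (N:ℤ)+1 then ξ m else 0 with hηdef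
  set u : ℤ → ℝ := fun t : ℤ =>
    if 0 ≤ t then fWord f0 f1 (seqWord η 0 t.toNat) z
    else if -(M:ℤ) ≤ t then c (-t).toNat
    else (ginv f0 f1)^[(-t - M).toNat] (c M) with hudef
  have hη_in : ∀ m : ℤ, -(M:ℤ) ≤ m → m < (N:ℤ)+1 → η m = ξ m := by
    intro m h1 h2; simp only [hηdef]; rw [if_pos ⟨h1, h2⟩]
  have hη_out : ∀ m : ℤ, (m < -(M:ℤ) ∨ (N:ℤ) < m) → η m = 0 := by
    intro m h; simp only [hηdef]; rw [if_neg (by omega)]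
  have hu_nn : ∀ t : ℤ, 0 ≤ t → u t = fWord f0 f1 (seqWord η 0 t.toNat) z := by
    intro t ht; simp only [hudef]; rw [if_pos ht]
  have hu_mid : ∀ t : ℤ, -(M:ℤ) ≤ t → t < 0 → u t = c (-t).toNat := by
    intro t h1 h2; simp only [hudef]; rw [if_neg (by omega), if_pos h1]
  have hu_low : ∀ t : ℤ, t < -(M:ℤ) → u t = (ginv f0 f1)^[(-t - M).toNat] (c M) := by
    intro t h1; simp only [hudef]; rw [if_neg (by omega), if_neg (by omega)]
  have hwin : ∀ k : ℕ, k ≤ N + 1 → seqWord η 0 k = seqWord ξ 0 k := by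
    intro k hk
    apply seqWord_congr
    intro m h1 h2
    exact hη_in m (by omega) (by omega)
  have hfwd0 : ∀ t : ℤ, 0 ≤ t → t ≤ (N:ℤ)+1 → u t = fWord f0 f1 (seqWord ξ 0 t.toNat) z := by
    intro t h0 h1
    rw [hu_nn t h0, hwin t.toNat (by omega)]
  have huN1 : u ((N:ℤ)+1) = 0 := by
    rw [hfwd0 _ (by omega) le_rfl, show ((N:ℤ)+1).toNat = N+1 by omega]
    exact hzval
  have hrecA : ∀ t : ℤ, 0 ≤ t → u (t+1) = (if η t = 0 then f0 else f1) (u t) := by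
    intro t ht
    rw [hu_nn (t+1) (by omega), hu_nn t ht,
      show (t+1).toNat = t.toNat + 1 by omega, seqWord_succ_right, fWord_append, fWord_singleton,
      show (0:ℤ) + (t.toNat:ℤ) = t by omega]
    rfl
  have hzero_fwd : ∀ j : ℕ, u ((N:ℤ)+1+j) = 0 := by
    intro j
    induction j with
    | zero => simpa using huN1
    | succ j ih =>
      have h1 := hrecA ((N:ℤ)+1+j) (by omega)
      rw [if_pos (hη_out _ (Or.inr (by omega)))] at h1
      rw [ih, f0_zero H] at h1
      rw [show (N:ℤ)+1+((j+1:ℕ):ℤ) = (N:ℤ)+1+j+1 by push_cast; ring]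
      exact h1
  have hadm_mid : ∀ t : ℤ, 0 ≤ t → t ≤ (N:ℤ) →
      wordAdm f0 f1 d (seqWord ξ t (N + 1 - t.toNat)) (u t) := by
    intro t h0 h1
    have hsplit := seqWord_add ξ 0 t.toNat (N + 1 - t.toNat)
    rw [show t.toNat + (N + 1 - t.toNat) = N + 1 by omega] at hsplit
    rw [show (0:ℤ) + (t.toNat:ℤ) = t by omega] at hsplit
    have hz2 := hzadm
    rw [hsplit, wordAdm_append] at hz2
    rw [hfwd0 t h0 (by omega)]
    exact hz2.2
  have hFO : FullOrb f0 f1 d η u := by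
    intro t
    rcases le_or_gt 0 t with ht | ht
    · refine ⟨?_, ?_, by rw [← ite_apply]; exact (hrecA t ht).symm⟩
      · rcases le_or_gt t (N:ℤ) with h2 | h2
        · exact wordAdm_mem (hadm_mid t ht h2)
        · rw [show t = (N:ℤ)+1+(((t - (N+1)).toNat : ℕ) : ℤ) by omega, hzero_fwd]
          norm_num
      · intro h1
        rcases le_or_gt t (N:ℤ) with h2 | h2
        · have hadm := hadm_mid t ht h2
          rw [show N + 1 - t.toNat = (N - t.toNat) + 1 by omega, seqWord_succ_left] at hadm
          refine hadm.2.1 ?_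
          rw [← hη_in t (by omega) (by omega)]
          exact h1
        · rw [hη_out t (Or.inr h2)] at h1
          exact absurd h1 (by decide)
    · rcases le_or_gt (-(M:ℤ)) t with hm | hm
      · have hmu : u t = c (-t).toNat := hu_mid t hm ht
        have hmidx : (-t).toNat = ((-t).toNat - 1) + 1 := by omega
        set m := (-t).toNat - 1 with hmdef
        have hsym : ξ (-(m:ℤ)-1) = ξ t := by congr 1; omega
        have hnext : u (t+1) = c m := by
          rcases eq_or_lt_of_le (show t + 1 ≤ 0 by omega) with he | hl
          · rw [hu_nn (t+1) (by omega), show (t+1).toNat = 0 by omega, seqWord_zero, fWord_nil,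
              show m = 0 by omega]
            exact hc0.symm
          · rw [hu_mid (t+1) (by omega) hl, show (-(t+1)).toNat = m by omega]
        refine ⟨by rw [hmu]; exact (hcB _).1, ?_, ?_⟩
        · intro h1
          have hξ1 : ξ (-(m:ℤ)-1) = 1 := by
            rw [hsym, ← hη_in t (by omega) (by omega)]
            exact h1
          rw [hmu, hmidx]
          exact ((hcQ m).2 hξ1).1
        · have hηt : η t = ξ t := hη_in t (by omega) (by omega)
          rcases fin2_cases (ξ t) with h | h
          · rw [if_pos (by rw [hηt]; exact h), hmu, hnext, hmidx]
            exact (hcQ m).1 (by rw [hsym]; exact h)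
          · rw [if_neg (by rw [hηt, h]; decide), hmu, hnext, hmidx]
            exact ((hcQ m).2 (by rw [hsym]; exact h)).2
      · have hlowu : u t = (ginv f0 f1)^[(-t - M).toNat] (c M) := hu_low t hm
        have hη0 : η t = 0 := hη_out t (Or.inl (by omega))
        refine ⟨by rw [hlowu]; exact ginv_iter_mem H hcMIcc _, ?_, ?_⟩
        · intro h1; rw [hη0] at h1; exact absurd h1 (by decide)
        · rw [if_pos hη0, hlowu]
          rcases eq_or_lt_of_le (show t + 1 ≤ -(M:ℤ) by omega) with he | hl
          · have hnext : u (t+1) = c M := by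
              rcases Nat.eq_zero_or_pos M with hM0 | hM0
              · rw [hu_nn (t+1) (by omega), show (t+1).toNat = 0 by omega, seqWord_zero,
                  fWord_nil, hM0]
                exact hc0.symm
              · rw [hu_mid (t+1) (by omega) (by omega), show (-(t+1)).toNat = M by omega]
            rw [hnext, show (-t - M).toNat = 0 + 1 by omega]
            have := ginv_iter_step H hcMIcc 0
            rwa [Function.iterate_zero_apply] at this
          · rw [hu_low (t+1) hl, show (-(t+1) - M).toNat = (-(t+1) - M).toNat from rfl]
            rw [show (-t - M).toNat = (-(t+1) - M).toNat + 1 by omega]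
            exact ginv_iter_step H hcMIcc _
  have hu0 : u 0 = z := by
    rw [hu_nn 0 le_rfl, show (0:ℤ).toNat = 0 from rfl, seqWord_zero, fWord_nil]
  have hTendW : Tendsto (fun k : ℕ => u (k:ℤ)) atTop (nhds 0) := by
    apply Tendsto.congr' _ tendsto_const_nhds
    filter_upwards [eventually_ge_atTop (N+1)] with k hk
    have := hzero_fwd (k - (N+1))
    rw [show (N:ℤ)+1+((k - (N+1) : ℕ):ℤ) = (k:ℤ) by omega] at this
    exact this.symm
  have e : ∀ j : ℕ, u (-(((j + M : ℕ)):ℤ)) = (ginv f0 f1)^[j] (c M) := by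
    intro j
    cases j with
    | zero =>
      rw [Function.iterate_zero_apply]
      rcases Nat.eq_zero_or_pos M with hM0 | hM0
      · rw [show -(((0 + M : ℕ)):ℤ) = 0 by omega, hu0, hM0]
        exact hc0.symm
      · rw [hu_mid _ (by omega) (by omega), show (-(-(((0 + M : ℕ)):ℤ))).toNat = M by omega]
    | succ j =>
      rw [hu_low _ (by push_cast; omega),
        show (-(-(((j + 1 + M : ℕ)):ℤ)) - M).toNat = j + 1 by push_cast; omega]
  have hTendU : Tendsto (fun m : ℕ => u (-(m:ℤ))) atTop (nhds 0) := by
    exact (tendsto_add_atTop_iff_nat M).1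
      ((tendsto_ginv_iter H hcMIcc hcM1).congr fun j => (e j).symm)
  refine ⟨η, fun m h1 h2 => hη_in m (by omega) (by omega), ?_, ?_⟩
  · rw [show z = u 0 from hu0.symm]
    exact mem_Ws_of_fullOrb hFO ⟨N+1, fun m hm => hη_out m (Or.inr (by omega))⟩ hTendW
  · rw [show z = u 0 from hu0.symm]
    exact mem_Wu_of_fullOrb hFO ⟨M+1, fun m hm => hη_out m (Or.inl (by omega))⟩ hTendU

end Constructions

/-! ## Statement 11 -/

theorem statement_11 (f0 f1 df0 df1 : ℝ → ℝ) (d : ℝ) (hH1 : H1 f0 f1 df0 df1 d)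
    (hH2 : H2 df0 df1 d) :
    ∀ ξ ∈ SigmaCod f0 f1 d,
      (ξ, xMinus f0 f1 d ξ) ∈ homClass f0 f1 d Pfix ∧
      (ξ, xPlus f0 f1 d ξ) ∈ homClass f0 f1 d Qfix := by
  intro ξ hξ
  obtain ⟨p, hpΓ, hp1⟩ := hξ.1
  have hpair : (ξ, p.2) = p := by
    rw [← hp1]
  have hΓ : (ξ, p.2) ∈ Gamma f0 f1 d := by
    rw [hpair]; exact hpΓ
  constructor
  · -- the point (ξ, x_{ξ⁻}) is in H(P,F)
    have htend : Tendsto (fun N : ℕ =>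
        (((fun m : ℤ => if -(N:ℤ) ≤ m ∧ m ≤ (N:ℤ) then ξ m else 0) : Seq2),
          tprime f0 f1 ξ 0 N)) atTop (nhds (ξ, xMinus f0 f1 d ξ)) := by
      apply Tendsto.prodMk_nhds
      · rw [tendsto_pi_nhds]
        intro n
        apply Tendsto.congr' _ tendsto_const_nhds
        filter_upwards [eventually_ge_atTop n.natAbs] with N hN
        exact (if_pos (show -(N:ℤ) ≤ n ∧ n ≤ (N:ℤ) by omega)).symm
      · exact tendsto_xMinus hH1 hΓ.2
    show _ ∈ closure (WsOrbit f0 f1 d Pfix ∩ WuOrbit f0 f1 d Pfix)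
    refine mem_closure_of_tendsto htend ?_
    filter_upwards with N
    obtain ⟨h1, h2⟩ := constructionP hH1 hΓ hξ N
    exact ⟨mem_WsOrbit h1, mem_WuOrbit h2⟩
  · -- the point (ξ, x_{ξ⁺}) is in H(Q,F)
    choose η hηw hmem using fun N => constructionQ hH1 hΓ hξ N
    have htend : Tendsto (fun N : ℕ => ((η N : Seq2), aWord f0 f1 d (seqWord ξ 0 (N+1))))
        atTop (nhds (ξ, xPlus f0 f1 d ξ)) := by
      apply Tendsto.prodMk_nhds
      · rw [tendsto_pi_nhds]
        intro n
        apply Tendsto.congr' _ tendsto_const_nhds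
        filter_upwards [eventually_ge_atTop n.natAbs] with N hN
        exact (hηw N n (by omega) (by omega)).symm
      · exact (tendsto_add_atTop_iff_nat 1).2 (tendsto_xPlus hH1 hΓ.1)
    show _ ∈ closure (WsOrbit f0 f1 d Qfix ∩ WuOrbit f0 f1 d Qfix)
    refine mem_closure_of_tendsto htend ?_
    filter_upwards with N
    exact ⟨mem_WsOrbit (hmem N).1, mem_WuOrbit (hmem N).2⟩

end DGR
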